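/- arXiv:1310.0209 — 6 statements merged into one kernel-verified Lean document; each statement's English description precedes it below -/
import Mathlib

section
/- Let T>0 and U be an open subset of ℝ. Let k ∈ H¹₁([0,T]), H ∈ C¹(U), and u ∈ L₁([0,T]) with u(t) ∈ U for a.a. t ∈ (0,T). Suppose that the functions H(u), H'(u)u, and H'(u)(k̇⋆u) belong to L₁([0,T]). Then for a.a. t ∈ (0,T) one has the fundamental identity: H'(u(t))·(d/dt)(k⋆u)(t) = (d/dt)(k⋆H(u))(t) + (−H(u(t)) + H'(u(t))u(t))·k(t) + ∫₀ᵗ [H(u(t−s)) − H(u(t)) − H'(u(t))(u(t−s) − u(t))]·(−k̇(s)) ds. -/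
open MeasureTheory Set

/-- Convolution on the positive half-line: `(f ⋆ g)(t) = ∫₀ᵗ f(t-τ) g(τ) dτ`. -/
noncomputable def conv (f g : ℝ → ℝ) (t : ℝ) : ℝ :=
  ∫ τ in (0:ℝ)..t, f (t - τ) * g τ

/-!
Writing `k t = k 0 + ∫₀ᵗ k'`, Fubini's theorem gives `(k ⋆ g)(t) = ∫₀ᵗ (k 0 * g + k' ⋆ g)` for
every integrable `g`, so by Lebesgue's differentiation theorem `∂ₜ(k ⋆ g) = k 0 * g + k' ⋆ g`
almost everywhere. For `g = u` and `g = H ∘ u` the identity then becomes a linear one, once the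
remainder integral is split into `k' ⋆ (H ∘ u)`, `∫₀ᵗ k'` and `k' ⋆ u`. Each of these exists
for a.e. `t` because `conv` agrees on `[0, T]` with the convolution on `ℝ` of the zero extensions
of the factors, which are integrable.
-/

open scoped Convolution

section Convolution

variable {f g : ℝ → ℝ}

lemma conv_eq_integral_mul_sub (t : ℝ) :
    conv f g t = ∫ s in (0:ℝ)..t, f s * g (t - s) := by
  rw [conv]
  simpa using
    (intervalIntegral.integral_comp_sub_left (fun s => f s * g (t - s)) t (a := 0) (b := t))

lemma indicator_mul_indicator_sub {a b σ : ℝ} (ha : σ ≤ a) (hb : σ ≤ b) (τ : ℝ) :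
    (Ioc 0 a).indicator f τ * (Ioc 0 b).indicator g (σ - τ) =
      (Ioo 0 σ).indicator (fun s => f s * g (σ - s)) τ := by
  simp only [indicator_apply, mem_Ioc, mem_Ioo]
  split_ifs <;> grind

lemma conv_eq_convolution {a b σ : ℝ} (hσ : 0 ≤ σ) (ha : σ ≤ a) (hb : σ ≤ b) :
    conv f g σ =
      ((Ioc 0 a).indicator f ⋆[ContinuousLinearMap.mul ℝ ℝ] (Ioc 0 b).indicator g) σ := by
  simp only [convolution, ContinuousLinearMap.mul_apply', indicator_mul_indicator_sub ha hb]
  rw [integral_indicator measurableSet_Ioo, conv_eq_integral_mul_sub,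
    intervalIntegral.integral_of_le hσ, integral_Ioc_eq_integral_Ioo]

lemma integrableOn_conv {T : ℝ} (hf : IntegrableOn f (Icc 0 T)) (hg : IntegrableOn g (Icc 0 T)) :
    IntegrableOn (conv f g) (Icc 0 T) := by
  have hF := (hf.mono_set Ioc_subset_Icc_self).integrable_indicator measurableSet_Ioc
  have hG := (hg.mono_set Ioc_subset_Icc_self).integrable_indicator measurableSet_Ioc
  exact (hF.integrable_convolution (ContinuousLinearMap.mul ℝ ℝ) hG).integrableOn.congr_fun
    (fun σ hσ => (conv_eq_convolution hσ.1 hσ.2 hσ.2).symm) measurableSet_Icc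

lemma ae_intervalIntegrable_mul_sub {T : ℝ} (hf : IntegrableOn f (Icc 0 T))
    (hg : IntegrableOn g (Icc 0 T)) :
    ∀ᵐ t ∂(volume.restrict (Ioo 0 T)),
      IntervalIntegrable (fun s => f s * g (t - s)) volume 0 t := by
  have hF := (hf.mono_set Ioc_subset_Icc_self).integrable_indicator measurableSet_Ioc
  have hG := (hg.mono_set Ioc_subset_Icc_self).integrable_indicator measurableSet_Ioc
  filter_upwards [ae_restrict_of_ae (hF.ae_convolution_exists (ContinuousLinearMap.mul ℝ ℝ) hG),
    ae_restrict_mem measurableSet_Ioo] with t ht htT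
  have hIoo : IntegrableOn (fun s => f s * g (t - s)) (Ioo 0 t) := by
    simpa [ConvolutionExistsAt, indicator_mul_indicator_sub htT.2.le htT.2.le,
      integrable_indicator_iff measurableSet_Ioo] using ht
  exact (intervalIntegrable_iff_integrableOn_Ioo_of_le htT.1.le).2 hIoo

lemma setIntegral_convolution_mul {F G : ℝ → ℝ} (hF : Integrable F) (hG : Integrable G)
    (s : Set ℝ) :
    ∫ x in s, (F ⋆[ContinuousLinearMap.mul ℝ ℝ] G) x = ∫ τ, (∫ x in s, F (x - τ)) * G τ := by
  have hint : Integrable (fun p : ℝ × ℝ => F (p.1 - p.2) * G p.2)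
      ((volume.restrict s).prod volume) := by
    have := (hG.convolution_integrand (ContinuousLinearMap.mul ℝ ℝ).flip hF).restrict
      (s := s ×ˢ univ)
    simpa [← Measure.prod_restrict, mul_comm] using this
  calc ∫ x in s, (F ⋆[ContinuousLinearMap.mul ℝ ℝ] G) x
      = ∫ x in s, ∫ τ, F (x - τ) * G τ := by
        simp only [convolution_eq_swap, ContinuousLinearMap.mul_apply']
    _ = ∫ τ, ∫ x in s, F (x - τ) * G τ := integral_integral_swap hint
    _ = ∫ τ, (∫ x in s, F (x - τ)) * G τ := by simp only [integral_mul_const]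

lemma integral_conv_eq_integral_primitive_mul {y : ℝ} (hy : 0 ≤ y)
    (hf : IntegrableOn f (Icc 0 y)) (hg : IntegrableOn g (Icc 0 y)) :
    ∫ σ in (0:ℝ)..y, conv f g σ = ∫ τ in (0:ℝ)..y, (∫ s in (0:ℝ)..y - τ, f s) * g τ := by
  have hF := (hf.mono_set Ioc_subset_Icc_self).integrable_indicator measurableSet_Ioc
  have hG := (hg.mono_set Ioc_subset_Icc_self).integrable_indicator measurableSet_Ioc
  have hshift : ∀ τ ∈ Ioc 0 y,
      ∫ x in Ioc 0 y, (Ioc 0 y).indicator f (x - τ) = ∫ s in (0:ℝ)..y - τ, f s := by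
    intro τ hτ
    rw [← intervalIntegral.integral_of_le hy, intervalIntegral.integral_comp_sub_right,
      intervalIntegral.integral_of_le (by linarith), setIntegral_indicator measurableSet_Ioc,
      Ioc_inter_Ioc, max_eq_right (by linarith [hτ.1]), min_eq_left (by linarith [hτ.1]),
      intervalIntegral.integral_of_le (by linarith [hτ.2])]
  rw [intervalIntegral.integral_of_le hy, intervalIntegral.integral_of_le hy,
    setIntegral_congr_fun measurableSet_Ioc (fun σ hσ => conv_eq_convolution hσ.1.le hσ.2 hσ.2),
    setIntegral_convolution_mul hF hG]
  simp_rw [← indicator_mul_right (Ioc 0 y)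
    fun τ => ∫ x in Ioc 0 y, (Ioc 0 y).indicator f (x - τ)]
  rw [integral_indicator measurableSet_Ioc]
  exact setIntegral_congr_fun measurableSet_Ioc (fun τ hτ => by simp only [hshift τ hτ])

end Convolution

section AbsolutelyContinuousKernel

variable {k k' g : ℝ → ℝ}

lemma conv_eq_integral {y : ℝ} (hy : 0 ≤ y) (hk' : IntegrableOn k' (Icc 0 y))
    (hk : ∀ t ∈ Icc (0:ℝ) y, k t = k 0 + ∫ s in (0:ℝ)..t, k' s) (hg : IntegrableOn g (Icc 0 y)) :
    conv k g y = ∫ σ in (0:ℝ)..y, (k 0 * g σ + conv k' g σ) := by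
  have hprim : ContinuousOn (fun τ => ∫ s in (0:ℝ)..y - τ, k' s) (Icc 0 y) := by
    have := intervalIntegral.continuousOn_primitive_interval (f := k') (a := 0) (b := y)
      (μ := volume) (by rwa [uIcc_of_le hy])
    rw [uIcc_of_le hy] at this
    exact this.comp (continuousOn_const.sub continuousOn_id)
      (fun τ hτ => ⟨by linarith [hτ.2], by linarith [hτ.1]⟩)
  have hIcc {φ : ℝ → ℝ} (hφ : IntegrableOn φ (Icc 0 y)) : IntervalIntegrable φ volume 0 y :=
    (intervalIntegrable_iff_integrableOn_Icc_of_le hy).2 hφ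
  rw [intervalIntegral.integral_add ((hIcc hg).const_mul _) (hIcc (integrableOn_conv hk' hg)),
    intervalIntegral.integral_const_mul, integral_conv_eq_integral_primitive_mul hy hk' hg, conv,
    ← intervalIntegral.integral_const_mul, ← intervalIntegral.integral_add
      ((hIcc hg).const_mul _) (hIcc (hg.continuousOn_mul hprim isCompact_Icc))]
  refine intervalIntegral.integral_congr (fun τ hτ => ?_)
  rw [uIcc_of_le hy] at hτ
  simp only [hk (y - τ) ⟨by linarith [hτ.2], by linarith [hτ.1]⟩]
  ring

lemma ae_hasDerivAt_conv {T : ℝ} (hk' : IntegrableOn k' (Icc 0 T))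
    (hk : ∀ t ∈ Icc (0:ℝ) T, k t = k 0 + ∫ s in (0:ℝ)..t, k' s) (hg : IntegrableOn g (Icc 0 T)) :
    ∀ᵐ t ∂(volume.restrict (Ioo 0 T)), HasDerivAt (conv k g) (k 0 * g t + conv k' g t) t := by
  rcases le_or_gt T 0 with hT | hT
  · simp [Ioo_eq_empty_of_le hT]
  have hint : IntervalIntegrable (fun σ => k 0 * g σ + conv k' g σ) volume 0 T :=
    (intervalIntegrable_iff_integrableOn_Icc_of_le hT.le).2
      ((hg.const_mul _).add (integrableOn_conv hk' hg))
  filter_upwards [ae_restrict_of_ae hint.ae_hasDerivAt_integral,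
    ae_restrict_mem measurableSet_Ioo] with t ht htT
  have htT' : t ∈ uIcc 0 T := by rw [uIcc_of_le hT.le]; exact Ioo_subset_Icc_self htT
  refine (ht htT' 0 left_mem_uIcc).congr_of_eventuallyEq ?_
  filter_upwards [Ioo_mem_nhds htT.1 htT.2] with y hy
  have hsub : Icc 0 y ⊆ Icc 0 T := Icc_subset_Icc_right hy.2.le
  exact conv_eq_integral hy.1.le (hk'.mono_set hsub) (fun s hs => hk s (hsub hs))
    (hg.mono_set hsub)

end AbsolutelyContinuousKernel

lemma integral_remainder_mul_neg {f g h : ℝ → ℝ} {t a b c : ℝ}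
    (hf : IntervalIntegrable f volume 0 t)
    (hg : IntervalIntegrable (fun s => f s * g (t - s)) volume 0 t)
    (hh : IntervalIntegrable (fun s => f s * h (t - s)) volume 0 t) :
    ∫ s in (0:ℝ)..t, (h (t - s) - b - c * (g (t - s) - a)) * -f s =
      (b - c * a) * (∫ s in (0:ℝ)..t, f s) + c * conv f g t - conv f h t := by
  have hexpand : (fun s => (h (t - s) - b - c * (g (t - s) - a)) * -f s) =
      fun s => (b - c * a) * f s + c * (f s * g (t - s)) - f s * h (t - s) := by
    funext s; ring
  rw [hexpand, intervalIntegral.integral_sub ((hf.const_mul _).add (hg.const_mul _)) hh,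
    intervalIntegral.integral_add (hf.const_mul _) (hg.const_mul _),
    intervalIntegral.integral_const_mul, intervalIntegral.integral_const_mul,
    conv_eq_integral_mul_sub, conv_eq_integral_mul_sub]

theorem fundamental_identity_general
    (T : ℝ)
    (k k' : ℝ → ℝ)
    (hk'int : IntegrableOn k' (Icc 0 T))
    (hkFTC : ∀ t ∈ Icc (0:ℝ) T, k t = k 0 + ∫ s in (0:ℝ)..t, k' s)
    (H H' : ℝ → ℝ)
    (u : ℝ → ℝ) (huint : IntegrableOn u (Icc 0 T))
    (hHu : IntegrableOn (fun t => H (u t)) (Icc 0 T)) :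
    ∀ᵐ t ∂(volume.restrict (Ioo 0 T)), ∃ d₁ d₂ : ℝ,
      HasDerivAt (conv k u) d₁ t ∧
      HasDerivAt (conv k (fun τ => H (u τ))) d₂ t ∧
      H' (u t) * d₁ =
        d₂ + (-(H (u t)) + H' (u t) * u t) * k t +
          ∫ s in (0:ℝ)..t,
            (H (u (t - s)) - H (u t) - H' (u t) * (u (t - s) - u t)) * (-(k' s)) := by
  filter_upwards [ae_hasDerivAt_conv hk'int hkFTC huint, ae_hasDerivAt_conv hk'int hkFTC hHu,
    ae_intervalIntegrable_mul_sub hk'int huint, ae_intervalIntegrable_mul_sub hk'int hHu,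
    ae_restrict_mem measurableSet_Ioo] with t hdu hdHu hk'u hk'Hu ht
  refine ⟨_, _, hdu, hdHu, ?_⟩
  have hk't : IntervalIntegrable k' volume 0 t :=
    (intervalIntegrable_iff_integrableOn_Icc_of_le ht.1.le).2
      (hk'int.mono_set (Icc_subset_Icc_right ht.2.le))
  rw [integral_remainder_mul_neg (h := fun τ => H (u τ)) hk't hk'u hk'Hu,
    hkFTC t (Ioo_subset_Icc_self ht)]
  ring

/-- The fundamental identity for operators of the form `∂ₜ(k ⋆ ·)`. -/
theorem fundamental_identity
    (T : ℝ) (hT : 0 < T) (U : Set ℝ) (hU : IsOpen U)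
    (k k' : ℝ → ℝ)
    (hk'int : IntegrableOn k' (Icc 0 T))
    (hkFTC : ∀ t ∈ Icc (0:ℝ) T, k t = k 0 + ∫ s in (0:ℝ)..t, k' s)
    (H H' : ℝ → ℝ)
    (hH : ∀ y ∈ U, HasDerivAt H (H' y) y)
    (hH'cont : ContinuousOn H' U)
    (u : ℝ → ℝ) (huint : IntegrableOn u (Icc 0 T))
    (huU : ∀ᵐ t ∂(volume.restrict (Ioo 0 T)), u t ∈ U)
    (hHu : IntegrableOn (fun t => H (u t)) (Icc 0 T))
    (hH'uu : IntegrableOn (fun t => H' (u t) * u t) (Icc 0 T))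
    (hH'uk'u : IntegrableOn (fun t => H' (u t) * conv k' u t) (Icc 0 T)) :
    ∀ᵐ t ∂(volume.restrict (Ioo 0 T)), ∃ d₁ d₂ : ℝ,
      HasDerivAt (conv k u) d₁ t ∧
      HasDerivAt (conv k (fun τ => H (u τ))) d₂ t ∧
      H' (u t) * d₁ =
        d₂ + (-(H (u t)) + H' (u t) * u t) * k t +
          ∫ s in (0:ℝ)..t,
            (H (u (t - s)) - H (u t) - H' (u t) * (u (t - s) - u t)) * (-(k' s)) :=
  fundamental_identity_general T k k' hk'int hkFTC H H' u huint hHu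
end

section
/- Let (k,l) be a pair of type PC, μ > 0, and T > 0. For n ∈ ℕ let hₙ ∈ L_{1,loc}(ℝ₊) be the (nonnegative) resolvent kernel of n·l, i.e. hₙ + n(hₙ⋆l) = n·l a.e. on (0,∞), and set kₙ := k⋆hₙ (so kₙ ∈ H¹₁([0,T]) is nonnegative and nonincreasing). Let fₙ ∈ L₁([0,T]) and let vₙ ∈ L₁([0,T]) be the solution of (d/dt)(kₙ⋆vₙ)(t) + μ·vₙ(t) = fₙ(t) for a.a. t ∈ (0,T). If fₙ → f in L₁([0,T]), then vₙ → v in L₁([0,T]), where v is the solution of v(t) + μ(l⋆v)(t) = (l⋆f)(t) for a.a. t ∈ (0,T). -/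
/-!
Convolving the resolvent identity `hₙ + n hₙ ⋆ l = n l` with `k` and using `k ⋆ l = 1` gives
`kₙ = n (1 - 1 ⋆ hₙ)`, so `kₙ ⋆ vₙ` is the primitive of `n (vₙ - hₙ ⋆ vₙ)` and the equation for
`vₙ` reads `n (vₙ - hₙ ⋆ vₙ) + μ vₙ = fₙ`. Convolving this with `l` and using the resolvent
identity once more eliminates `hₙ`: `vₙ + μ l ⋆ vₙ = l ⋆ fₙ + (fₙ - μ vₙ) / n`. Hence
`w = vₙ - v` satisfies `|w| ≤ |l ⋆ (fₙ - f)| + (|fₙ| + μ |v|) / n + μ |l ⋆ w|`. For the weighted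
norm `∫ e^{-ρt} |·|` convolution is submultiplicative and the norm of `l` tends to `0` as
`ρ → ∞`, so for large `ρ` the last term is absorbed and
`‖w‖₁ ≤ C (‖l‖₁ ‖fₙ - f‖₁ + (‖fₙ‖₁ + μ ‖v‖₁) / n) → 0`.

All functions are cut off to `(0, T]` and extended by zero; for such functions `conv` is Mathlib's
convolution on `ℝ`, written `∗` below.
-/

open MeasureTheory Set Filter

open scoped ENNReal Topology

local notation:67 A " ∗ " B:66 => convolution A B (ContinuousLinearMap.mul ℝ ℝ) volume

def IsCausal (A : ℝ → ℝ) : Prop := ∀ t ≤ 0, A t = 0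

lemma isCausal_indicator_Ioc (T : ℝ) (a : ℝ → ℝ) : IsCausal ((Ioc 0 T).indicator a) :=
  fun _ ht => indicator_of_notMem (fun h => not_lt.2 ht h.1) a

lemma IsCausal.linear_comb {A B : ℝ → ℝ} (hA : IsCausal A) (hB : IsCausal B) (a b : ℝ) :
    IsCausal fun x => a * A x + b * B x := fun t ht => by simp [hA t ht, hB t ht]

lemma convolution_mul_comm (A B : ℝ → ℝ) : A ∗ B = B ∗ A := by
  ext t
  rw [convolution_mul_swap, convolution_mul]
  simp_rw [mul_comm]

lemma IsCausal.convolution {A B : ℝ → ℝ} (hA : IsCausal A) (hB : IsCausal B) :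
    IsCausal (A ∗ B) := by
  intro t ht
  rw [convolution_mul]
  refine integral_eq_zero_of_ae (ae_of_all _ fun τ => ?_)
  rcases le_or_gt τ 0 with h | h
  · simp [hA τ h]
  · simp [hB (t - τ) (by linarith)]

lemma IsCausal.convolution_eq_conv {A B : ℝ → ℝ} (hA : IsCausal A) (hB : IsCausal B) {t : ℝ}
    (ht : 0 ≤ t) : (A ∗ B) t = conv A B t := by
  rw [convolution_mul_swap, conv, intervalIntegral.integral_of_le ht,
    setIntegral_eq_integral_of_forall_compl_eq_zero]
  intro τ hτ
  rcases le_or_gt τ 0 with h | h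
  · simp [hB τ h]
  · simp [hA (t - τ) (by linarith [not_le.1 fun h' => hτ ⟨h, h'⟩])]

lemma conv_eq_convolution_indicator {T t : ℝ} (a b : ℝ → ℝ) (ht : t ∈ Icc 0 T) :
    conv a b t = ((Ioc 0 T).indicator a ∗ (Ioc 0 T).indicator b) t := by
  rw [(isCausal_indicator_Ioc T a).convolution_eq_conv (isCausal_indicator_Ioc T b) ht.1, conv,
    conv]
  refine intervalIntegral.integral_congr_ae ?_
  filter_upwards [measure_singleton t |> measure_eq_zero_iff_ae_notMem.1] with τ hne hτ
  rw [uIoc_of_le ht.1] at hτ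
  have hτt : τ < t := lt_of_le_of_ne hτ.2 hne
  rw [indicator_of_mem (show t - τ ∈ Ioc 0 T from ⟨by linarith, by linarith [hτ.1, ht.2]⟩),
    indicator_of_mem (show τ ∈ Ioc 0 T from ⟨hτ.1, hτ.2.trans ht.2⟩)]

lemma convolution_eq_of_ae_eq_on_Ioc {T t : ℝ} {A X Y : ℝ → ℝ} (hA : IsCausal A)
    (hX : IsCausal X) (hY : IsCausal Y) (hXY : X =ᵐ[volume.restrict (Ioc 0 T)] Y)
    (ht : t ≤ T) : (A ∗ X) t = (A ∗ Y) t := by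
  rw [convolution_mul, convolution_mul]
  refine integral_congr_ae ?_
  have hXY' : ∀ᵐ τ, t - τ ∈ Ioc 0 T → X (t - τ) = Y (t - τ) :=
    (quasiMeasurePreserving_sub_left_of_right_invariant volume t).ae
      ((ae_restrict_iff' measurableSet_Ioc).1 hXY)
  filter_upwards [hXY'] with τ hτ
  by_cases hmem : t - τ ∈ Ioc 0 T
  · rw [hτ hmem]
  rcases le_or_gt (t - τ) 0 with h | h
  · rw [hX _ h, hY _ h]
  · rw [hA τ (by linarith [not_le.1 fun h' => hmem ⟨h, h'⟩]), zero_mul, zero_mul]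

lemma convolution_linear_comb_apply {A B C : ℝ → ℝ} {t : ℝ}
    (hB : ConvolutionExistsAt A B t (ContinuousLinearMap.mul ℝ ℝ))
    (hC : ConvolutionExistsAt A C t (ContinuousLinearMap.mul ℝ ℝ)) (b c : ℝ) :
    (A ∗ fun x => b * B x + c * C x) t = b * (A ∗ B) t + c * (A ∗ C) t := by
  simp only [ConvolutionExistsAt, ContinuousLinearMap.mul_apply'] at hB hC
  simp only [convolution_mul]
  rw [← integral_const_mul, ← integral_const_mul, ← integral_add (hB.const_mul b)
    (hC.const_mul c)]
  simp_rw [mul_add, mul_left_comm]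

lemma ae_convolution_linear_comb {A B C : ℝ → ℝ} (hA : Integrable A) (hB : Integrable B)
    (hC : Integrable C) (b c : ℝ) :
    ∀ᵐ t, (A ∗ fun x => b * B x + c * C x) t = b * (A ∗ B) t + c * (A ∗ C) t := by
  filter_upwards [hA.ae_convolution_exists (ContinuousLinearMap.mul ℝ ℝ) hB,
    hA.ae_convolution_exists (ContinuousLinearMap.mul ℝ ℝ) hC] with t hB' hC'
  exact convolution_linear_comb_apply hB' hC' b c

lemma convolutionExistsAt_of_abs_le {A B : ℝ → ℝ} {M : ℝ} (hA : Integrable A)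
    (hB : AEStronglyMeasurable B) (hBM : ∀ x, |B x| ≤ M) (t : ℝ) :
    ConvolutionExistsAt A B t (ContinuousLinearMap.mul ℝ ℝ) := by
  simpa [ConvolutionExistsAt, ContinuousLinearMap.mul_apply'] using
    hA.mul_bdd (hB.comp_quasiMeasurePreserving
      (quasiMeasurePreserving_sub_left_of_right_invariant volume t))
      (ae_of_all _ fun τ => hBM (t - τ))

lemma ae_convolution_assoc {A B C : ℝ → ℝ} (hA : Integrable A) (hB : Integrable B)
    (hC : Integrable C) : ∀ᵐ t, ((A ∗ B) ∗ C) t = (A ∗ (B ∗ C)) t := by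
  filter_upwards [hA.norm.ae_convolution_exists (ContinuousLinearMap.mul ℝ ℝ)
    (hB.norm.integrable_convolution (ContinuousLinearMap.mul ℝ ℝ) hC.norm)] with t hABC
  exact convolution_assoc _ _ _ _ (fun x y z => mul_assoc x y z) hA.1 hB.1 hC.1
    (hA.ae_convolution_exists _ hB)
    (hB.norm.ae_convolution_exists (ContinuousLinearMap.mul ℝ ℝ) hC.norm) hABC

lemma convolution_assoc_of_abs_le {A B C : ℝ → ℝ} {M : ℝ} (hAM : ∀ x, |A x| ≤ M)
    (hA : Integrable A) (hB : Integrable B) (hC : Integrable C) (t : ℝ) :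
    ((A ∗ B) ∗ C) t = (A ∗ (B ∗ C)) t := by
  refine convolution_assoc _ _ _ _ (fun x y z => mul_assoc x y z) hA.1 hB.1 hC.1
    (hA.ae_convolution_exists _ hB)
    (hB.norm.ae_convolution_exists (ContinuousLinearMap.mul ℝ ℝ) hC.norm) ?_
  have hBC := (hB.norm.integrable_convolution (ContinuousLinearMap.mul ℝ ℝ) hC.norm).comp_sub_left t
  simpa [ConvolutionExistsAt, ContinuousLinearMap.mul_apply'] using
    hBC.bdd_mul (c := M) hA.1.norm (ae_of_all _ fun x => by simpa using hAM x)

lemma convolution_const_mul (A B : ℝ → ℝ) (d t : ℝ) :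
    (A ∗ fun x => d * B x) t = d * (A ∗ B) t := by
  simp only [convolution_mul, ← integral_const_mul]
  simp_rw [mul_left_comm]

lemma ae_convolution_of_ae_eq {T b c d : ℝ} {A B C D : ℝ → ℝ} (hAc : IsCausal A)
    (hBc : IsCausal B) (hCc : IsCausal C) (hDc : IsCausal D) (hA : Integrable A)
    (hB : Integrable B) (hC : Integrable C)
    (h : ∀ᵐ t ∂volume.restrict (Ioc 0 T), b * B t + c * C t = d * D t) :
    ∀ᵐ t ∂volume.restrict (Ioc 0 T), b * (A ∗ B) t + c * (A ∗ C) t = d * (A ∗ D) t := by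
  filter_upwards [ae_restrict_of_ae (ae_convolution_linear_comb hA hB hC b c),
    ae_restrict_mem measurableSet_Ioc] with t hlin ht
  rw [← hlin, ← convolution_const_mul, convolution_eq_of_ae_eq_on_Ioc hAc
    (hBc.linear_comb hCc b c) (fun x hx => by simp [hDc x hx]) h ht.2]

lemma convolution_indicator_one_eq_integral {T t : ℝ} {X : ℝ → ℝ} (hX : IsCausal X)
    (ht : t ∈ Icc 0 T) : ((Ioc 0 T).indicator 1 ∗ X) t = ∫ τ in 0..t, X τ := by
  rw [(isCausal_indicator_Ioc T 1).convolution_eq_conv hX ht.1, conv]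
  refine intervalIntegral.integral_congr_ae ?_
  filter_upwards [measure_singleton t |> measure_eq_zero_iff_ae_notMem.1] with τ hne hτ
  rw [uIoc_of_le ht.1] at hτ
  rw [indicator_of_mem (show t - τ ∈ Ioc 0 T from
    ⟨sub_pos.2 (lt_of_le_of_ne hτ.2 hne), by linarith [hτ.1, ht.2]⟩), Pi.one_apply, one_mul]

lemma abs_convolution_le_of_abs_le_one {A B : ℝ → ℝ} (hA : ∀ x, |A x| ≤ 1) (hB : Integrable B)
    (t : ℝ) : |(A ∗ B) t| ≤ ∫ τ, |B τ| := by
  rw [convolution_mul_swap, ← Real.norm_eq_abs]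
  refine norm_integral_le_of_norm_le hB.abs (ae_of_all _ fun τ => ?_)
  simpa [abs_mul] using mul_le_of_le_one_left (abs_nonneg _) (hA (t - τ))

lemma indicator_Ioc_convolution_eq {T t : ℝ} {X V : ℝ → ℝ} (hX : IsCausal X) (hV : IsCausal V)
    (ht : t ≤ T) : ((Ioc 0 T).indicator X ∗ V) t = (X ∗ V) t := by
  rw [convolution_mul_comm, convolution_mul_comm X]
  refine convolution_eq_of_ae_eq_on_Ioc hV (isCausal_indicator_Ioc T X) hX ?_ ht
  filter_upwards [ae_restrict_mem measurableSet_Ioc] with τ hτ using indicator_of_mem hτ X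

noncomputable def weightedNorm (ρ : ℝ) (A : ℝ → ℝ) : ℝ≥0∞ :=
  ∫⁻ t, ENNReal.ofReal (Real.exp (-(ρ * t))) * ‖A t‖ₑ

lemma ofReal_exp_neg_mul_add (ρ s t : ℝ) :
    ENNReal.ofReal (Real.exp (-(ρ * (s + t)))) =
      ENNReal.ofReal (Real.exp (-(ρ * s))) * ENNReal.ofReal (Real.exp (-(ρ * t))) := by
  rw [← ENNReal.ofReal_mul (Real.exp_pos _).le, ← Real.exp_add]
  ring_nf

lemma weightedNorm_convolution_le (ρ : ℝ) {A B : ℝ → ℝ} (hA : AEStronglyMeasurable A)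
    (hB : AEStronglyMeasurable B) :
    weightedNorm ρ (A ∗ B) ≤ weightedNorm ρ A * weightedNorm ρ B := by
  set F : ℝ → ℝ≥0∞ := fun t => ENNReal.ofReal (Real.exp (-(ρ * t))) * ‖A t‖ₑ
  set G : ℝ → ℝ≥0∞ := fun t => ENNReal.ofReal (Real.exp (-(ρ * t))) * ‖B t‖ₑ
  have hF : AEMeasurable F := by fun_prop
  have hG : AEMeasurable G := by fun_prop
  have hpt : ∀ t, ENNReal.ofReal (Real.exp (-(ρ * t))) * ‖(A ∗ B) t‖ₑ ≤
      ∫⁻ τ, F τ * G (t - τ) := fun t => by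
    calc _ ≤ ENNReal.ofReal (Real.exp (-(ρ * t))) * ∫⁻ τ, ‖A τ‖ₑ * ‖B (t - τ)‖ₑ := by
          rw [convolution_mul]
          gcongr
          simpa only [enorm_mul] using enorm_integral_le_lintegral_enorm (fun τ => A τ * B (t - τ))
      _ = ∫⁻ τ, F τ * G (t - τ) := by
          rw [← lintegral_const_mul' _ _ ENNReal.ofReal_ne_top]
          refine lintegral_congr fun τ => ?_
          simp only [F, G]
          rw [← add_sub_cancel τ t, ofReal_exp_neg_mul_add, add_sub_cancel_left]
          ring
  have hFG : AEMeasurable (Function.uncurry fun t τ => F τ * G (t - τ)) (volume.prod volume) :=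
    (hF.comp_quasiMeasurePreserving Measure.quasiMeasurePreserving_snd).mul
      (hG.comp_quasiMeasurePreserving (Measure.quasiMeasurePreserving_fst.comp
        (measurePreserving_sub_prod volume volume).quasiMeasurePreserving))
  calc weightedNorm ρ (A ∗ B) ≤ ∫⁻ t, ∫⁻ τ, F τ * G (t - τ) := lintegral_mono hpt
    _ = ∫⁻ τ, ∫⁻ t, F τ * G (t - τ) := lintegral_lintegral_swap hFG
    _ = ∫⁻ τ, F τ * ∫⁻ t, G t := lintegral_congr fun τ => by
        rw [lintegral_const_mul' _ _ (by simp [F, ENNReal.mul_ne_top]),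
          lintegral_sub_right_eq_self G τ]
    _ = weightedNorm ρ A * weightedNorm ρ B := lintegral_mul_const'' _ hF

lemma integral_abs_convolution_le {A B : ℝ → ℝ} (hA : Integrable A) (hB : Integrable B) :
    ∫ t, |(A ∗ B) t| ≤ (∫ t, |A t|) * ∫ t, |B t| := by
  have h := weightedNorm_convolution_le 0 hA.1 hB.1
  simp only [weightedNorm, zero_mul, neg_zero, Real.exp_zero, ENNReal.ofReal_one, one_mul] at h
  simp_rw [← Real.norm_eq_abs, integral_norm_eq_lintegral_enorm hA.1,
    integral_norm_eq_lintegral_enorm hB.1,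
    integral_norm_eq_lintegral_enorm (hA.integrable_convolution _ hB).1, ← ENNReal.toReal_mul]
  exact ENNReal.toReal_mono (ENNReal.mul_ne_top hA.2.ne hB.2.ne) h

lemma weight_mul_enorm_le {ρ : ℝ} {A : ℝ → ℝ} (hρ : 0 ≤ ρ) (hA : IsCausal A) (t : ℝ) :
    ENNReal.ofReal (Real.exp (-(ρ * t))) * ‖A t‖ₑ ≤ ‖A t‖ₑ := by
  rcases le_or_gt t 0 with ht | ht
  · simp [hA t ht]
  · refine mul_le_of_le_one_left zero_le (ENNReal.ofReal_le_one.2 ?_)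
    exact Real.exp_le_one_iff.2 (by nlinarith)

lemma weightedNorm_le_lintegral {ρ : ℝ} {A : ℝ → ℝ} (hρ : 0 ≤ ρ) (hA : IsCausal A) :
    weightedNorm ρ A ≤ ∫⁻ t, ‖A t‖ₑ :=
  lintegral_mono (weight_mul_enorm_le hρ hA)

lemma lintegral_le_exp_mul_weightedNorm {ρ T : ℝ} {A : ℝ → ℝ} (hρ : 0 ≤ ρ)
    (hA : ∀ t, T < t → A t = 0) :
    ∫⁻ t, ‖A t‖ₑ ≤ ENNReal.ofReal (Real.exp (ρ * T)) * weightedNorm ρ A := by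
  rw [weightedNorm, ← lintegral_const_mul' _ _ ENNReal.ofReal_ne_top]
  refine lintegral_mono fun t => ?_
  rcases le_or_gt t T with ht | ht
  · rw [← mul_assoc, ← ENNReal.ofReal_mul (Real.exp_pos _).le, ← Real.exp_add]
    refine le_mul_of_one_le_left zero_le (ENNReal.one_le_ofReal.2 ?_)
    exact Real.one_le_exp_iff.2 (by nlinarith)
  · simp [hA t ht]

lemma tendsto_weightedNorm_atTop {A : ℝ → ℝ} (hA : Integrable A) (hAc : IsCausal A) :
    Tendsto (fun ρ => weightedNorm ρ A) atTop (𝓝 0) := by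
  have hlim : ∀ t, Tendsto (fun ρ : ℝ => ENNReal.ofReal (Real.exp (-(ρ * t))) * ‖A t‖ₑ) atTop
      (𝓝 0) := fun t => by
    rcases le_or_gt t 0 with ht | ht
    · simp [hAc t ht]
    · have hexp : Tendsto (fun ρ : ℝ => Real.exp (-(ρ * t))) atTop (𝓝 0) :=
        Real.tendsto_exp_neg_atTop_nhds_zero.comp (tendsto_id.atTop_mul_const ht)
      simpa using ENNReal.Tendsto.mul_const (ENNReal.tendsto_ofReal hexp) (Or.inr enorm_ne_top)
  simpa [weightedNorm] using tendsto_lintegral_filter_of_dominated_convergence' (fun t => ‖A t‖ₑ)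
    (Eventually.of_forall fun ρ => by fun_prop)
    (eventually_ge_atTop 0 |>.mono fun ρ hρ => ae_of_all _ (weight_mul_enorm_le hρ hAc))
    hA.2.ne (ae_of_all _ hlim)

lemma weightedNorm_le_of_abs_le {ρ μ T : ℝ} {L W G : ℝ → ℝ} (hρ : 0 ≤ ρ) (hμ : 0 ≤ μ)
    (hL : Integrable L) (hW : Integrable W) (hWT : ∀ t ∉ Ioc 0 T, W t = 0)
    (hWG : ∀ᵐ t ∂volume.restrict (Ioc 0 T), |W t| ≤ |G t| + μ * |(L ∗ W) t|) :
    weightedNorm ρ W ≤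
      (∫⁻ t in Ioc 0 T, ‖G t‖ₑ) + ENNReal.ofReal μ * weightedNorm ρ L * weightedNorm ρ W := by
  set w : ℝ → ℝ≥0∞ := fun t => ENNReal.ofReal (Real.exp (-(ρ * t)))
  have hpt : ∀ᵐ t ∂volume.restrict (Ioc 0 T),
      w t * ‖W t‖ₑ ≤ ‖G t‖ₑ + ENNReal.ofReal μ * (w t * ‖(L ∗ W) t‖ₑ) := by
    filter_upwards [hWG, ae_restrict_mem measurableSet_Ioc] with t ht htT
    have hw1 : w t ≤ 1 := ENNReal.ofReal_le_one.2 (Real.exp_le_one_iff.2 (by nlinarith [htT.1]))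
    calc w t * ‖W t‖ₑ ≤ w t * (‖G t‖ₑ + ENNReal.ofReal μ * ‖(L ∗ W) t‖ₑ) := by
          gcongr
          simp only [Real.enorm_eq_ofReal_abs, ← ENNReal.ofReal_mul hμ]
          rw [← ENNReal.ofReal_add (abs_nonneg _) (by positivity)]
          exact ENNReal.ofReal_le_ofReal ht
      _ ≤ ‖G t‖ₑ + ENNReal.ofReal μ * (w t * ‖(L ∗ W) t‖ₑ) := by
          rw [mul_add, mul_left_comm]
          gcongr
          exact mul_le_of_le_one_left zero_le hw1
  have hLW : AEMeasurable fun t => w t * ‖(L ∗ W) t‖ₑ :=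
    (by fun_prop : Measurable w).aemeasurable.mul
      (hL.integrable_convolution _ hW).aestronglyMeasurable.enorm
  calc weightedNorm ρ W = ∫⁻ t in Ioc 0 T, w t * ‖W t‖ₑ := by
        refine (setLIntegral_eq_of_support_subset fun t ht => ?_).symm
        by_contra hnot
        simp [hWT t hnot] at ht
    _ ≤ ∫⁻ t in Ioc 0 T, (‖G t‖ₑ + ENNReal.ofReal μ * (w t * ‖(L ∗ W) t‖ₑ)) :=
        lintegral_mono_ae hpt
    _ = (∫⁻ t in Ioc 0 T, ‖G t‖ₑ) +
          ENNReal.ofReal μ * ∫⁻ t in Ioc 0 T, w t * ‖(L ∗ W) t‖ₑ := by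
        rw [lintegral_add_right' _ (hLW.const_mul _).restrict,
          lintegral_const_mul' _ _ ENNReal.ofReal_ne_top]
    _ ≤ _ := by
        rw [mul_assoc]
        gcongr
        exact setLIntegral_le_lintegral _ _ |>.trans (weightedNorm_convolution_le ρ hL.1 hW.1)

lemma weightedNorm_le_two_mul_of_abs_le {ρ μ T : ℝ} {L W G : ℝ → ℝ} (hρ : 0 ≤ ρ) (hμ : 0 ≤ μ)
    (hL : Integrable L) (hW : Integrable W) (hWT : ∀ t ∉ Ioc 0 T, W t = 0)
    (hsmall : ENNReal.ofReal μ * weightedNorm ρ L ≤ 2⁻¹)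
    (hWG : ∀ᵐ t ∂volume.restrict (Ioc 0 T), |W t| ≤ |G t| + μ * |(L ∗ W) t|) :
    weightedNorm ρ W ≤ 2 * ∫⁻ t in Ioc 0 T, ‖G t‖ₑ := by
  set x := weightedNorm ρ W
  have hx : x ≠ ⊤ := ne_top_of_le_ne_top hW.2.ne
    (weightedNorm_le_lintegral hρ fun t ht => hWT t fun h => not_lt.2 ht h.1)
  have key : x / 2 + x / 2 ≤ (∫⁻ t in Ioc 0 T, ‖G t‖ₑ) + x / 2 := by
    rw [ENNReal.add_halves, ENNReal.div_eq_inv_mul]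
    refine (weightedNorm_le_of_abs_le hρ hμ hL hW hWT hWG).trans ?_
    gcongr
  have hhalf := (ENNReal.add_le_add_iff_right (ENNReal.div_ne_top hx two_ne_zero)).1 key
  calc x = 2 * (x / 2) := (ENNReal.mul_div_cancel two_ne_zero ENNReal.ofNat_ne_top).symm
    _ ≤ _ := by gcongr

theorem exists_integral_abs_le_of_abs_le_convolution {L : ℝ → ℝ} {μ : ℝ} (hL : Integrable L)
    (hLc : IsCausal L) (hμ : 0 ≤ μ) (T : ℝ) :
    ∃ C, 0 ≤ C ∧ ∀ W G : ℝ → ℝ, Integrable W → IntegrableOn G (Ioc 0 T) →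
      (∀ t ∉ Ioc 0 T, W t = 0) →
      (∀ᵐ t ∂volume.restrict (Ioc 0 T), |W t| ≤ |G t| + μ * |(L ∗ W) t|) →
      ∫ t, |W t| ≤ C * ∫ t in Ioc 0 T, |G t| := by
  have hlim : Tendsto (fun ρ => ENNReal.ofReal μ * weightedNorm ρ L) atTop (𝓝 0) := by
    simpa using ENNReal.Tendsto.const_mul (tendsto_weightedNorm_atTop hL hLc)
      (Or.inr ENNReal.ofReal_ne_top)
  obtain ⟨ρ, hρ, hsmall⟩ := ((eventually_ge_atTop 0).and
    (hlim.eventually (eventually_le_nhds (by norm_num : (0 : ℝ≥0∞) < 2⁻¹)))).exists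
  refine ⟨2 * Real.exp (ρ * T), by positivity, fun W G hW hG hWT hWG => ?_⟩
  have hbound : ∫⁻ t, ‖W t‖ₑ ≤ ENNReal.ofReal (2 * Real.exp (ρ * T) * ∫ t in Ioc 0 T, |G t|) :=
    calc ∫⁻ t, ‖W t‖ₑ ≤ ENNReal.ofReal (Real.exp (ρ * T)) * weightedNorm ρ W :=
          lintegral_le_exp_mul_weightedNorm hρ fun t ht => hWT t fun h => not_le.2 ht h.2
      _ ≤ ENNReal.ofReal (Real.exp (ρ * T)) * (2 * ∫⁻ t in Ioc 0 T, ‖G t‖ₑ) := by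
          gcongr
          exact weightedNorm_le_two_mul_of_abs_le hρ hμ hL hW hWT hsmall hWG
      _ = _ := by
          simp_rw [← Real.norm_eq_abs, ← ofReal_integral_norm_eq_lintegral_enorm hG]
          rw [ENNReal.ofReal_mul (by positivity), ENNReal.ofReal_mul (by positivity)]
          norm_num
          ring
  simp_rw [← Real.norm_eq_abs, integral_norm_eq_lintegral_enorm hW.1]
  exact ENNReal.toReal_le_of_le_ofReal (by positivity) (by simpa using hbound)

lemma abs_sub_le_of_perturbed_eq {n μ a b p q r s x : ℝ} (hn : 0 < n) (hμ : 0 ≤ μ)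
    (ha : n * a + n * μ * p = n * r + x - μ * a) (hb : b + μ * q = s) :
    |a - b| ≤ |r - s| + (|x| + μ * |b|) / n + μ * |p - q| := by
  have key : (n + μ) * (a - b) = n * (r - s) - n * μ * (p - q) + x - μ * b := by
    linear_combination ha - n * hb
  have hscaled : n * |a - b| ≤ n * |r - s| + n * μ * |p - q| + (|x| + μ * |b|) :=
    calc n * |a - b| ≤ |(n + μ) * (a - b)| := by
          rw [abs_mul, abs_of_pos (show 0 < n + μ by linarith)]
          exact mul_le_mul_of_nonneg_right (by linarith) (abs_nonneg _)
      _ ≤ |n * (r - s)| + |n * μ * (p - q)| + |x| + |μ * b| := by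
          rw [key, abs_le]
          constructor <;> linarith [abs_le.1 (le_refl |n * (r - s)|),
            abs_le.1 (le_refl |n * μ * (p - q)|), abs_le.1 (le_refl |x|),
            abs_le.1 (le_refl |μ * b|)]
      _ = n * |r - s| + n * μ * |p - q| + (|x| + μ * |b|) := by
          simp only [abs_mul, abs_of_pos hn, abs_of_nonneg hμ]
          ring
  calc |a - b| = n * |a - b| / n := by field_simp
    _ ≤ (n * |r - s| + n * μ * |p - q| + (|x| + μ * |b|)) / n := by gcongr
    _ = _ := by field_simp; ring

lemma integral_perturbation_le {L V F' F : ℝ → ℝ} {μ n : ℝ} (hL : Integrable L)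
    (hV : Integrable V) (hF' : Integrable F') (hF : Integrable F) (hn : 0 ≤ n) :
    ∫ t, (|(L ∗ fun x => F' x - F x) t| + (|F' t| + μ * |V t|) / n) ≤
      (∫ t, |L t|) * (∫ t, |F' t - F t|) +
        ((∫ t, |F' t - F t|) + (∫ t, |F t|) + μ * ∫ t, |V t|) / n := by
  have hΔ : Integrable fun t => |F' t - F t| := (hF'.sub hF).abs
  have hF'le : ∫ t, |F' t| ≤ (∫ t, |F' t - F t|) + ∫ t, |F t| := by
    rw [← integral_add hΔ hF.abs]
    exact integral_mono hF'.abs (hΔ.add hF.abs) fun t => by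
      simpa using abs_add_le (F' t - F t) (F t)
  have hLΔ : Integrable fun t => |(L ∗ fun x => F' x - F x) t| :=
    (hL.integrable_convolution _ (hF'.sub hF)).abs
  have hX : Integrable fun t => (|F' t| + μ * |V t|) / n :=
    (hF'.abs.add (hV.abs.const_mul μ)).div_const n
  rw [integral_add hLΔ hX, integral_div, integral_add hF'.abs (hV.abs.const_mul μ),
    integral_const_mul]
  gcongr
  exact integral_abs_convolution_le hL (hF'.sub hF)

theorem exists_integral_abs_sub_le_of_perturbed_volterra {L : ℝ → ℝ} {μ : ℝ}
    (hL : Integrable L) (hLc : IsCausal L) (hμ : 0 ≤ μ) (T : ℝ) :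
    ∃ C, ∀ n : ℝ, 0 < n → ∀ V' V F' F : ℝ → ℝ, Integrable V' → Integrable V → Integrable F' →
      Integrable F → (∀ t ∉ Ioc 0 T, V' t = 0) → (∀ t ∉ Ioc 0 T, V t = 0) →
      (∀ᵐ t ∂volume.restrict (Ioc 0 T),
        n * V' t + n * μ * (L ∗ V') t = n * (L ∗ F') t + F' t - μ * V' t) →
      (∀ᵐ t ∂volume.restrict (Ioc 0 T), V t + μ * (L ∗ V) t = (L ∗ F) t) →
      ∫ t, |V' t - V t| ≤ C * ((∫ t, |L t|) * (∫ t, |F' t - F t|) +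
        ((∫ t, |F' t - F t|) + (∫ t, |F t|) + μ * ∫ t, |V t|) / n) := by
  obtain ⟨C, hC0, hC⟩ := exists_integral_abs_le_of_abs_le_convolution hL hLc hμ T
  refine ⟨C, fun n hn V' V F' F hV' hV hF' hF hV'T hVT hV'eq hVeq => ?_⟩
  set G : ℝ → ℝ := fun t => |(L ∗ fun x => F' x - F x) t| + (|F' t| + μ * |V t|) / n
  have hG : Integrable G := (hL.integrable_convolution _ (hF'.sub hF)).abs.add
    ((hF'.abs.add (hV.abs.const_mul μ)).div_const n)
  have hG0 : ∀ t, 0 ≤ G t := fun t => by positivity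
  have hWG : ∀ᵐ t ∂volume.restrict (Ioc 0 T),
      |V' t - V t| ≤ |G t| + μ * |(L ∗ fun x => V' x - V x) t| := by
    filter_upwards [hV'eq, hVeq, ae_restrict_of_ae (ae_convolution_linear_comb hL hV' hV 1 (-1)),
      ae_restrict_of_ae (ae_convolution_linear_comb hL hF' hF 1 (-1))] with t h1 h2 h3 h4
    simp only [one_mul, neg_one_mul, ← sub_eq_add_neg] at h3 h4
    rw [abs_of_nonneg (hG0 t), h3]
    simp only [G]
    rw [h4]
    exact abs_sub_le_of_perturbed_eq hn hμ h1 h2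
  calc ∫ t, |V' t - V t| ≤ C * ∫ t in Ioc 0 T, |G t| :=
        hC _ G (hV'.sub hV) hG.integrableOn (fun t ht => by simp [hV'T t ht, hVT t ht]) hWG
    _ ≤ C * ∫ t, G t := by
        simp_rw [abs_of_nonneg (hG0 _)]
        exact mul_le_mul_of_nonneg_left (setIntegral_le_integral hG (ae_of_all _ hG0)) hC0
    _ ≤ _ := by
        gcongr
        exact integral_perturbation_le hL hV hF' hF hn.le

section Resolvent

variable {T n : ℝ} {K L H V F : ℝ → ℝ}

lemma ae_convolution_resolvent_eq (hKc : IsCausal K) (hLc : IsCausal L) (hHc : IsCausal H)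
    (hK : Integrable K) (hL : Integrable L) (hH : Integrable H)
    (hKL : ∀ᵐ t ∂volume.restrict (Ioc 0 T), (K ∗ L) t = 1)
    (hres : ∀ᵐ t ∂volume.restrict (Ioc 0 T), H t + n * (H ∗ L) t = n * L t) :
    ∀ᵐ t ∂volume.restrict (Ioc 0 T), (K ∗ H) t = n - n * ((Ioc 0 T).indicator 1 ∗ H) t := by
  set E : ℝ → ℝ := (Ioc 0 T).indicator 1
  have hKLE : K ∗ L =ᵐ[volume.restrict (Ioc 0 T)] E := by
    filter_upwards [hKL, ae_restrict_mem measurableSet_Ioc] with t h ht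
    simp [E, h, ht]
  have hKHL := ae_convolution_of_ae_eq (A := K) (b := 1) hKc hHc (hHc.convolution hLc) hLc hK hH
    (hH.integrable_convolution _ hL) (by simpa only [one_mul] using hres)
  have hassoc : ∀ᵐ t ∂volume.restrict (Ioc 0 T), (K ∗ H ∗ L) t = (E ∗ H) t := by
    filter_upwards [ae_restrict_of_ae (ae_convolution_assoc hK hL hH),
      ae_restrict_mem measurableSet_Ioc] with t h ht
    rw [convolution_mul_comm H L, ← h, convolution_mul_comm, convolution_mul_comm E,
      convolution_eq_of_ae_eq_on_Ioc hHc (hKc.convolution hLc) (isCausal_indicator_Ioc T 1)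
        hKLE ht.2]
  filter_upwards [hKHL, hassoc, hKL] with t h1 h2 h3
  rw [h2, h3] at h1
  linarith

lemma convolution_convolution_eq_integral (hKc : IsCausal K) (hHc : IsCausal H)
    (hVc : IsCausal V) (hH : Integrable H) (hV : Integrable V)
    (hKH : ∀ᵐ t ∂volume.restrict (Ioc 0 T), (K ∗ H) t = n - n * ((Ioc 0 T).indicator 1 ∗ H) t)
    {t : ℝ} (ht : t ∈ Icc 0 T) :
    ((K ∗ H) ∗ V) t = ∫ τ in 0..t, (n * V τ - n * (H ∗ V) τ) := by
  set E : ℝ → ℝ := (Ioc 0 T).indicator 1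
  have hE1 : ∀ x, |E x| ≤ 1 := fun x => by
    by_cases hx : x ∈ Ioc 0 T <;> simp [E, hx]
  have hE : Integrable E := (integrable_indicator_iff measurableSet_Ioc).2
    (integrableOn_const measure_Ioc_lt_top.ne)
  have hEc : IsCausal E := isCausal_indicator_Ioc T 1
  have hKH' : K ∗ H =ᵐ[volume.restrict (Ioc 0 T)] fun x => n * E x + -n * (E ∗ H) x := by
    filter_upwards [hKH, ae_restrict_mem measurableSet_Ioc] with x h hx
    simp [h, E, hx, sub_eq_add_neg]
  have hV' : IntervalIntegrable V volume 0 t := hV.intervalIntegrable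
  have hHV' : IntervalIntegrable (H ∗ V) volume 0 t :=
    (hH.integrable_convolution _ hV).intervalIntegrable
  -- `E` and `E ∗ H` are bounded, so linearity and associativity hold at every `t`, not just
  -- almost everywhere: this is what allows differentiating in `t` afterwards.
  calc ((K ∗ H) ∗ V) t = (V ∗ fun x => n * E x + -n * (E ∗ H) x) t := by
        rw [convolution_mul_comm]
        exact convolution_eq_of_ae_eq_on_Ioc hVc (hKc.convolution hHc)
          (hEc.linear_comb (hEc.convolution hHc) _ _) hKH' ht.2
    _ = n * (E ∗ V) t - n * (E ∗ (H ∗ V)) t := by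
        rw [convolution_linear_comb_apply (convolutionExistsAt_of_abs_le hV hE.1 hE1 t)
          (convolutionExistsAt_of_abs_le hV (hE.integrable_convolution _ hH).1
            (abs_convolution_le_of_abs_le_one hE1 hH) t),
          convolution_mul_comm V, convolution_mul_comm V,
          convolution_assoc_of_abs_le hE1 hE hH hV]
        ring
    _ = ∫ τ in 0..t, (n * V τ - n * (H ∗ V) τ) := by
        rw [intervalIntegral.integral_sub (hV'.const_mul n) (hHV'.const_mul n),
          intervalIntegral.integral_const_mul, intervalIntegral.integral_const_mul,
          convolution_indicator_one_eq_integral hVc ht,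
          convolution_indicator_one_eq_integral (hHc.convolution hVc) ht]

lemma ae_hasDerivAt_of_eq_primitive {Φ X : ℝ → ℝ} (hX : Integrable X)
    (hΦ : ∀ t ∈ Icc 0 T, Φ t = ∫ τ in 0..t, X τ) :
    ∀ᵐ t ∂volume.restrict (Ioo 0 T), HasDerivAt Φ (X t) t := by
  filter_upwards [ae_restrict_of_ae (LocallyIntegrable.ae_hasDerivAt_integral hX.locallyIntegrable),
    ae_restrict_mem measurableSet_Ioo] with t hd ht
  refine (hd 0).congr_of_eventuallyEq ?_
  filter_upwards [Ioo_mem_nhds ht.1 ht.2] with s hs using hΦ s ⟨hs.1.le, hs.2.le⟩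

lemma ae_perturbed_volterra_of_resolvent {μ : ℝ} (hLc : IsCausal L) (hHc : IsCausal H)
    (hVc : IsCausal V) (hFc : IsCausal F) (hL : Integrable L) (hH : Integrable H)
    (hV : Integrable V)
    (hres : ∀ᵐ t ∂volume.restrict (Ioc 0 T), H t + n * (H ∗ L) t = n * L t)
    (hVF : ∀ᵐ t ∂volume.restrict (Ioc 0 T), n * V t - n * (H ∗ V) t + μ * V t = F t) :
    ∀ᵐ t ∂volume.restrict (Ioc 0 T),
      n * V t + n * μ * (L ∗ V) t = n * (L ∗ F) t + F t - μ * V t := by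
  have hHL := ae_convolution_of_ae_eq (A := V) (b := 1) hVc hHc (hHc.convolution hLc) hLc hV hH
    (hH.integrable_convolution _ hL) (by simpa only [one_mul] using hres)
  have hLV := ae_convolution_of_ae_eq (A := L) (b := n + μ) (c := -n) (d := 1) hLc hVc
    (hHc.convolution hVc) hFc hL hV (hH.integrable_convolution _ hV)
    (by filter_upwards [hVF] with t h; linear_combination h)
  filter_upwards [hHL, hLV, hVF, ae_restrict_of_ae (ae_convolution_assoc hL hH hV)]
    with t h1 h2 h3 h4
  rw [convolution_mul_comm V H, convolution_mul_comm V L, convolution_mul_comm V,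
    convolution_mul_comm H L, h4] at h1
  -- `h1 + h2` eliminates `L ∗ (H ∗ V)`, leaving `H ∗ V = L ∗ F - μ L ∗ V`
  linear_combination h3 + n * h1 + n * h2

end Resolvent

section Window

variable {T : ℝ}

lemma ae_resolvent_indicator {n : ℝ} {h l : ℝ → ℝ}
    (hres : ∀ᵐ t ∂volume.restrict (Ioc 0 T), h t + n * conv h l t = n * l t) :
    ∀ᵐ t ∂volume.restrict (Ioc 0 T), (Ioc 0 T).indicator h t +
      n * ((Ioc 0 T).indicator h ∗ (Ioc 0 T).indicator l) t = n * (Ioc 0 T).indicator l t := by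
  filter_upwards [hres, ae_restrict_mem measurableSet_Ioc] with t h ht
  rwa [← conv_eq_convolution_indicator _ _ (Ioc_subset_Icc_self ht), indicator_of_mem ht,
    indicator_of_mem ht]

lemma conv_regularized_eq_integral {n : ℝ} {k l h v : ℝ → ℝ} (hk : IntegrableOn k (Ioc 0 T))
    (hl : IntegrableOn l (Ioc 0 T)) (hh : IntegrableOn h (Ioc 0 T))
    (hv : IntegrableOn v (Ioc 0 T)) (hkl : ∀ t, 0 < t → conv k l t = 1)
    (hres : ∀ᵐ t ∂volume.restrict (Ioc 0 T), h t + n * conv h l t = n * l t)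
    {t : ℝ} (ht : t ∈ Icc 0 T) :
    conv (conv k h) v t = ∫ τ in 0..t,
      (n * (Ioc 0 T).indicator v τ - n * ((Ioc 0 T).indicator h ∗ (Ioc 0 T).indicator v) τ) := by
  have hc := isCausal_indicator_Ioc T
  have hKL : ∀ᵐ t ∂volume.restrict (Ioc 0 T),
      ((Ioc 0 T).indicator k ∗ (Ioc 0 T).indicator l) t = 1 :=
    ae_restrict_of_forall_mem measurableSet_Ioc fun t ht => by
      rw [← conv_eq_convolution_indicator _ _ (Ioc_subset_Icc_self ht), hkl t ht.1]
  have hKH := ae_convolution_resolvent_eq (hc k) (hc l) (hc h)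
    (hk.integrable_indicator measurableSet_Ioc) (hl.integrable_indicator measurableSet_Ioc)
    (hh.integrable_indicator measurableSet_Ioc) hKL (ae_resolvent_indicator hres)
  rw [← convolution_convolution_eq_integral (hc k) (hc h) (hc v)
      (hh.integrable_indicator measurableSet_Ioc) (hv.integrable_indicator measurableSet_Ioc)
      hKH ht,
    ← indicator_Ioc_convolution_eq ((hc k).convolution (hc h)) (hc v) ht.2,
    conv_eq_convolution_indicator _ _ ht,
    indicator_congr fun s hs => conv_eq_convolution_indicator k h (Ioc_subset_Icc_self hs)]

lemma ae_perturbed_volterra_of_regularized {n μ : ℝ} {k l h v f : ℝ → ℝ}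
    (hk : IntegrableOn k (Ioc 0 T)) (hl : IntegrableOn l (Ioc 0 T)) (hh : IntegrableOn h (Ioc 0 T))
    (hv : IntegrableOn v (Ioc 0 T)) (hkl : ∀ t, 0 < t → conv k l t = 1)
    (hres : ∀ᵐ t ∂volume.restrict (Ioc 0 T), h t + n * conv h l t = n * l t)
    (heq : ∀ᵐ t ∂volume.restrict (Ioo 0 T),
      ∃ d : ℝ, HasDerivAt (conv (conv k h) v) d t ∧ d + μ * v t = f t) :
    ∀ᵐ t ∂volume.restrict (Ioc 0 T),
      n * (Ioc 0 T).indicator v t + n * μ * ((Ioc 0 T).indicator l ∗ (Ioc 0 T).indicator v) t =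
        n * ((Ioc 0 T).indicator l ∗ (Ioc 0 T).indicator f) t + (Ioc 0 T).indicator f t -
          μ * (Ioc 0 T).indicator v t := by
  have hc := isCausal_indicator_Ioc T
  have iH := hh.integrable_indicator measurableSet_Ioc
  have iV := hv.integrable_indicator measurableSet_Ioc
  have hVF : ∀ᵐ t ∂volume.restrict (Ioc 0 T), n * (Ioc 0 T).indicator v t -
      n * ((Ioc 0 T).indicator h ∗ (Ioc 0 T).indicator v) t + μ * (Ioc 0 T).indicator v t =
        (Ioc 0 T).indicator f t := by
    rw [← Measure.restrict_congr_set Ioo_ae_eq_Ioc]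
    filter_upwards [heq, ae_hasDerivAt_of_eq_primitive
      ((iV.const_mul n).sub ((iH.integrable_convolution _ iV).const_mul n))
      fun t => conv_regularized_eq_integral hk hl hh hv hkl hres,
      ae_restrict_mem measurableSet_Ioo] with t ⟨d, hd, hdf⟩ hX ht
    rw [hd.unique hX, Pi.sub_apply] at hdf
    simpa only [indicator_of_mem (Ioo_subset_Ioc_self ht)] using hdf
  exact ae_perturbed_volterra_of_resolvent (hc l) (hc h) (hc v) (hc f)
    (hl.integrable_indicator measurableSet_Ioc) iH iV (ae_resolvent_indicator hres) hVF

lemma ae_volterra_indicator_of_conv {μ : ℝ} {l v f : ℝ → ℝ}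
    (hveq : ∀ᵐ t ∂volume.restrict (Ioo 0 T), v t + μ * conv l v t = conv l f t) :
    ∀ᵐ t ∂volume.restrict (Ioc 0 T), (Ioc 0 T).indicator v t +
      μ * ((Ioc 0 T).indicator l ∗ (Ioc 0 T).indicator v) t =
        ((Ioc 0 T).indicator l ∗ (Ioc 0 T).indicator f) t := by
  rw [← Measure.restrict_congr_set Ioo_ae_eq_Ioc]
  filter_upwards [hveq, ae_restrict_mem measurableSet_Ioo] with t h ht
  rwa [indicator_of_mem (Ioo_subset_Ioc_self ht), ← conv_eq_convolution_indicator _ _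
    (Ioo_subset_Icc_self ht), ← conv_eq_convolution_indicator _ _ (Ioo_subset_Icc_self ht)]

lemma integral_abs_indicator_Ioc (a : ℝ → ℝ) :
    ∫ t, |(Ioc 0 T).indicator a t| = ∫ t in Icc 0 T, |a t| := by
  simp_rw [← Real.norm_eq_abs, norm_indicator_eq_indicator_norm]
  rw [integral_indicator measurableSet_Ioc, integral_Icc_eq_integral_Ioc]

lemma integral_abs_indicator_Ioc_sub (a b : ℝ → ℝ) :
    ∫ t, |(Ioc 0 T).indicator a t - (Ioc 0 T).indicator b t| = ∫ t in Icc 0 T, |a t - b t| := by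
  rw [← integral_abs_indicator_Ioc, indicator_sub]

end Window

/-- A pair `(k, l)` of locally integrable kernels on `ℝ₊` is of type `PC` if `k` is
nonnegative and nonincreasing on `(0,∞)` and `k ⋆ l ≡ 1` on `(0,∞)`. -/
def IsPCPair (k l : ℝ → ℝ) : Prop :=
  (∀ t, 0 < t → 0 ≤ k t) ∧
  (∀ s t, 0 < s → s ≤ t → k t ≤ k s) ∧
  (∀ T, 0 < T → IntegrableOn k (Ioc 0 T)) ∧
  (∀ T, 0 < T → IntegrableOn l (Ioc 0 T)) ∧
  (∀ t, 0 < t → conv k l t = 1)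

theorem continuous_dependence_general
    (k l : ℝ → ℝ) (hPC : IsPCPair k l)
    (μ T : ℝ) (hμ : 0 < μ) (hT : 0 < T)
    (h : ℕ → ℝ → ℝ)
    (hint : ∀ n T', 0 < T' → IntegrableOn (h n) (Ioc 0 T'))
    (hres : ∀ n : ℕ, ∀ᵐ t ∂(volume.restrict (Ioi (0:ℝ))),
      h n t + (n : ℝ) * conv (h n) l t = (n : ℝ) * l t)
    (f v : ℝ → ℝ) (fn vn : ℕ → ℝ → ℝ)
    (hfn : ∀ n, IntegrableOn (fn n) (Icc 0 T))
    (hvn : ∀ n, IntegrableOn (vn n) (Icc 0 T))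
    (hf : IntegrableOn f (Icc 0 T)) (hv : IntegrableOn v (Icc 0 T))
    (heq : ∀ n : ℕ, ∀ᵐ t ∂(volume.restrict (Ioo 0 T)),
      ∃ d : ℝ, HasDerivAt (conv (conv k (h n)) (vn n)) d t ∧ d + μ * vn n t = fn n t)
    (hveq : ∀ᵐ t ∂(volume.restrict (Ioo 0 T)), v t + μ * conv l v t = conv l f t)
    (hfconv : Tendsto (fun n => ∫ t in Icc (0:ℝ) T, |fn n t - f t|) atTop (nhds 0)) :
    Tendsto (fun n => ∫ t in Icc (0:ℝ) T, |vn n t - v t|) atTop (nhds 0) := by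
  obtain ⟨-, -, hk, hl, hkl⟩ := hPC
  have hI {a : ℝ → ℝ} (ha : IntegrableOn a (Icc 0 T)) : Integrable ((Ioc 0 T).indicator a) :=
    (ha.mono_set Ioc_subset_Icc_self).integrable_indicator measurableSet_Ioc
  obtain ⟨C, hC⟩ := exists_integral_abs_sub_le_of_perturbed_volterra
    ((hl T hT).integrable_indicator measurableSet_Ioc) (isCausal_indicator_Ioc T l) hμ.le T
  have hbound : ∀ n : ℕ, 1 ≤ n → ∫ t in Icc 0 T, |vn n t - v t| ≤
      C * ((∫ t, |(Ioc 0 T).indicator l t|) * (∫ t in Icc 0 T, |fn n t - f t|) +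
        ((∫ t in Icc 0 T, |fn n t - f t|) + (∫ t in Icc 0 T, |f t|) +
          μ * ∫ t in Icc 0 T, |v t|) / n) := fun n hn => by
    simpa only [integral_abs_indicator_Ioc_sub, integral_abs_indicator_Ioc] using
      hC n (by positivity) _ _ _ _ (hI (hvn n)) (hI hv) (hI (hfn n)) (hI hf)
        (fun t ht => indicator_of_notMem ht _) (fun t ht => indicator_of_notMem ht _)
        (ae_perturbed_volterra_of_regularized (hk T hT) (hl T hT) (hint n T hT)
          ((hvn n).mono_set Ioc_subset_Icc_self) hkl
          (ae_restrict_of_ae_restrict_of_subset Ioc_subset_Ioi_self (hres n)) (heq n))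
        (ae_volterra_indicator_of_conv hveq)
  refine squeeze_zero' (Eventually.of_forall fun n => integral_nonneg fun t => abs_nonneg _)
    (eventually_atTop.2 ⟨1, hbound⟩) ?_
  have hdiv : Tendsto (fun n : ℕ => ((∫ t in Icc 0 T, |fn n t - f t|) + (∫ t in Icc 0 T, |f t|) +
      μ * ∫ t in Icc 0 T, |v t|) / n) atTop (𝓝 0) :=
    ((hfconv.add_const _).add_const _).div_atTop tendsto_natCast_atTop_atTop
  simpa using ((hfconv.const_mul _).add hdiv).const_mul C

/-- Continuous dependence: if `fₙ → f` in `L₁([0,T])` and `vₙ` solves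
`∂ₜ(kₙ ⋆ vₙ) + μ vₙ = fₙ` (with `kₙ = k ⋆ hₙ` the regularized kernels), then `vₙ → v`
in `L₁([0,T])`, where `v` solves `v + μ (l ⋆ v) = l ⋆ f`. -/
theorem continuous_dependence
    (k l : ℝ → ℝ) (hPC : IsPCPair k l)
    (μ T : ℝ) (hμ : 0 < μ) (hT : 0 < T)
    (h : ℕ → ℝ → ℝ)
    (hnn : ∀ n t, 0 < t → 0 ≤ h n t)
    (hint : ∀ n T', 0 < T' → IntegrableOn (h n) (Ioc 0 T'))
    (hres : ∀ n : ℕ, ∀ᵐ t ∂(volume.restrict (Ioi (0:ℝ))),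
      h n t + (n : ℝ) * conv (h n) l t = (n : ℝ) * l t)
    (f v : ℝ → ℝ) (fn vn : ℕ → ℝ → ℝ)
    (hfn : ∀ n, IntegrableOn (fn n) (Icc 0 T))
    (hvn : ∀ n, IntegrableOn (vn n) (Icc 0 T))
    (hf : IntegrableOn f (Icc 0 T)) (hv : IntegrableOn v (Icc 0 T))
    (heq : ∀ n : ℕ, ∀ᵐ t ∂(volume.restrict (Ioo 0 T)),
      ∃ d : ℝ, HasDerivAt (conv (conv k (h n)) (vn n)) d t ∧ d + μ * vn n t = fn n t)
    (hveq : ∀ᵐ t ∂(volume.restrict (Ioo 0 T)), v t + μ * conv l v t = conv l f t)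
    (hfconv : Tendsto (fun n => ∫ t in Icc (0:ℝ) T, |fn n t - f t|) atTop (nhds 0)) :
    Tendsto (fun n => ∫ t in Icc (0:ℝ) T, |vn n t - v t|) atTop (nhds 0) :=
  continuous_dependence_general k l hPC μ T hμ hT h hint hres f v fn vn hfn hvn hf hv heq hveq
    hfconv
end

section
/- Let 𝓗 be a real Hilbert space and T > 0. Let k ∈ H¹₁([0,T]) be nonnegative and nonincreasing. Then for any u₀ ∈ 𝓗 and any u ∈ L₂([0,T];𝓗) there holds, for a.a. t ∈ (0,T): ‖u(t)‖·(d/dt)(k⋆(‖u(·)‖ − ‖u₀‖))(t) ≤ ⟨u(t), (d/dt)(k⋆[u−u₀])(t)⟩, where k⋆(‖u(·)‖ − ‖u₀‖) denotes the convolution of k with the scalar function t ↦ ‖u(t)‖ − ‖u₀‖. -/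
/-!
Fix `t` at which `D₁ t`, `D₂ t` are derivatives and, by Lebesgue differentiation, `y ↦ ∫₀ʸ u`
and `y ↦ ∫₀ʸ ‖u‖` have derivatives `u t` and `‖u t‖`; put `v = u t`. By Cauchy–Schwarz the defects
`a τ = ‖v‖ ‖u τ‖ - ⟪v, u τ⟫` and `b = ‖v‖ ‖u₀‖ - ⟪v, u₀⟫` are nonnegative, and
`⟪v, k ⋆ (u - u₀)⟫ - ‖v‖ (k ⋆ (‖u‖ - ‖u₀‖)) = k ⋆ b - k ⋆ a`.
Since `k ≥ 0`, `k ⋆ b` is nondecreasing; since `k` is nonincreasing, `k ⋆ a` grows at most like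
`k 0 * ∫ a`. So `y ↦ (k ⋆ b - k ⋆ a)(y) + k 0 * ∫₀ʸ a` is nondecreasing on `[0, T]`; its derivative
at `t` is `⟪v, D₁ t⟫ - ‖v‖ D₂ t + k 0 * a t`, and `a t = 0`.
-/

open MeasureTheory Set

/-- Hilbert-space-valued convolution on the positive half-line. -/
noncomputable def convH {𝓗 : Type*} [NormedAddCommGroup 𝓗] [NormedSpace ℝ 𝓗]
    (f : ℝ → ℝ) (g : ℝ → 𝓗) (t : ℝ) : 𝓗 :=
  ∫ τ in (0:ℝ)..t, f (t - τ) • g τ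

open Topology

section Convolution

variable {E : Type*} [NormedAddCommGroup E] {k : ℝ → ℝ} {T : ℝ}

lemma MeasureTheory.IntegrableOn.intervalIntegrable_of_mem_Icc {f : ℝ → E}
    (hf : IntegrableOn f (Icc 0 T)) {y : ℝ} (hy : y ∈ Icc 0 T) : IntervalIntegrable f volume 0 y :=
  (intervalIntegrable_iff_integrableOn_Icc_of_le hy.1).2 (hf.mono_set (Icc_subset_Icc_right hy.2))

lemma AntitoneOn.intervalIntegrable_comp_sub_smul [NormedSpace ℝ E] (hk : AntitoneOn k (Icc 0 T))
    {f : ℝ → E} (hf : IntegrableOn f (Icc 0 T)) {y : ℝ} (hy : y ∈ Icc 0 T) :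
    IntervalIntegrable (fun τ => k (y - τ) • f τ) volume 0 y := by
  have hmem : ∀ τ ∈ Icc 0 y, y - τ ∈ Icc 0 T := fun τ hτ =>
    ⟨sub_nonneg.2 hτ.2, by linarith [hτ.1, hy.2]⟩
  have hmono : MonotoneOn (fun τ => k (y - τ)) (Icc 0 y) := fun τ hτ σ hσ hτσ =>
    hk (hmem σ hσ) (hmem τ hτ) (by linarith)
  rw [intervalIntegrable_iff_integrableOn_Ioc_of_le hy.1]
  refine (hf.mono_set fun τ hτ => ⟨hτ.1.le, hτ.2.trans hy.2⟩).bdd_smul (max |k T| |k 0|)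
    (aemeasurable_restrict_of_monotoneOn measurableSet_Ioc
      (hmono.mono Ioc_subset_Icc_self)).aestronglyMeasurable
    (ae_restrict_of_forall_mem measurableSet_Ioc fun τ hτ => ?_)
  have hτ := hmem τ (Ioc_subset_Icc_self hτ)
  exact abs_le_max_abs_abs (hk hτ (right_mem_Icc.2 (hy.1.trans hy.2)) hτ.2)
    (hk (left_mem_Icc.2 (hy.1.trans hy.2)) hτ hτ.1)

lemma conv_const (k : ℝ → ℝ) (b t : ℝ) : conv k (fun _ => b) t = (∫ s in 0..t, k s) * b := by
  simp only [conv, intervalIntegral.integral_mul_const, intervalIntegral.integral_comp_sub_left,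
    sub_self, sub_zero]

lemma monotoneOn_conv_const (hk₀ : ∀ s ∈ Icc 0 T, 0 ≤ k s) (hk : IntegrableOn k (Icc 0 T))
    {b : ℝ} (hb : 0 ≤ b) : MonotoneOn (conv k fun _ => b) (Icc 0 T) := by
  intro t ht y hy hty
  simp only [conv_const]
  refine mul_le_mul_of_nonneg_right (intervalIntegral.integral_mono_interval le_rfl ht.1 hty
    (ae_restrict_of_forall_mem measurableSet_Ioc fun s hs => hk₀ s ⟨hs.1.le, hs.2.trans hy.2⟩)
    (hk.intervalIntegrable_of_mem_Icc hy)) hb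

lemma monotoneOn_mul_integral_sub_conv (hk : AntitoneOn k (Icc 0 T)) {a : ℝ → ℝ}
    (ha : IntegrableOn a (Icc 0 T)) (ha₀ : ∀ τ ∈ Icc 0 T, 0 ≤ a τ) :
    MonotoneOn (fun y => k 0 * (∫ τ in 0..y, a τ) - conv k a y) (Icc 0 T) := by
  intro t ht y hy hty
  have hT : 0 ≤ T := ht.1.trans ht.2
  have hmem : ∀ {s τ}, s ∈ Icc 0 T → τ ∈ Icc 0 s → s - τ ∈ Icc 0 T := fun hs hτ =>
    ⟨sub_nonneg.2 hτ.2, by linarith [hτ.1, hs.2]⟩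
  have hkat : IntervalIntegrable (fun τ => k (t - τ) * a τ) volume 0 t :=
    hk.intervalIntegrable_comp_sub_smul ha ht
  have hkay : IntervalIntegrable (fun τ => k (y - τ) * a τ) volume 0 y :=
    hk.intervalIntegrable_comp_sub_smul ha hy
  have hat := ha.intervalIntegrable_of_mem_Icc ht
  have hay := ha.intervalIntegrable_of_mem_Icc hy
  have hsub₀ : uIcc 0 t ⊆ uIcc 0 y := uIcc_subset_uIcc left_mem_uIcc (mem_uIcc_of_le ht.1 hty)
  have hsub : uIcc t y ⊆ uIcc 0 y := uIcc_subset_uIcc (mem_uIcc_of_le ht.1 hty) right_mem_uIcc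
  have hsplit : conv k a y
      = (∫ τ in 0..t, k (y - τ) * a τ) + ∫ τ in t..y, k (y - τ) * a τ :=
    (intervalIntegral.integral_add_adjacent_intervals (hkay.mono_set hsub₀)
      (hkay.mono_set hsub)).symm
  have hpast : ∫ τ in 0..t, k (y - τ) * a τ ≤ conv k a t := by
    refine intervalIntegral.integral_mono_on ht.1 (hkay.mono_set hsub₀) hkat fun τ hτ => ?_
    exact mul_le_mul_of_nonneg_right (hk (hmem ht hτ) (hmem hy ⟨hτ.1, hτ.2.trans hty⟩)
      (by linarith)) (ha₀ τ ⟨hτ.1, hτ.2.trans ht.2⟩)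
  have hrecent : ∫ τ in t..y, k (y - τ) * a τ ≤ k 0 * ∫ τ in t..y, a τ := by
    rw [← intervalIntegral.integral_const_mul]
    refine intervalIntegral.integral_mono_on hty (hkay.mono_set hsub)
      ((hay.mono_set hsub).const_mul _) fun τ hτ => ?_
    have hτ' : τ ∈ Icc 0 y := ⟨ht.1.trans hτ.1, hτ.2⟩
    exact mul_le_mul_of_nonneg_right (hk (left_mem_Icc.2 hT) (hmem hy hτ') (hmem hy hτ').1)
      (ha₀ τ ⟨hτ'.1, hτ.2.trans hy.2⟩)
  have hint : ∫ τ in 0..y, a τ = (∫ τ in 0..t, a τ) + ∫ τ in t..y, a τ :=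
    (intervalIntegral.integral_add_adjacent_intervals hat (hay.mono_set hsub)).symm
  simp only [hsplit, hint, mul_add]
  linarith

end Convolution

lemma HasDerivAt.nonneg_of_monotoneOn_of_mem_nhds {f : ℝ → ℝ} {f' x : ℝ} {s : Set ℝ}
    (hf : HasDerivAt f f' x) (hmono : MonotoneOn f s) (hs : s ∈ 𝓝 x) : 0 ≤ f' :=
  hf.hasDerivWithinAt.nonneg_of_monotoneOn
    (by simpa using (PerfectSpace.univ_preperfect x (mem_univ x)).nhds_inter hs) hmono

section Hilbert

open scoped RealInnerProductSpace

variable {𝓗 : Type*} [NormedAddCommGroup 𝓗] [InnerProductSpace ℝ 𝓗] [CompleteSpace 𝓗]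
  {k : ℝ → ℝ} {T : ℝ} {u : ℝ → 𝓗}

lemma integral_norm_mul_sub_inner {y : ℝ} (hu : IntervalIntegrable u volume 0 y) (v : 𝓗) :
    ∫ τ in 0..y, (‖v‖ * ‖u τ‖ - ⟪v, u τ⟫)
      = ‖v‖ * (∫ τ in 0..y, ‖u τ‖) - ⟪v, ∫ τ in 0..y, u τ⟫ := by
  rw [intervalIntegral.integral_sub (hu.norm.const_mul _) ⟨hu.1.const_inner v, hu.2.const_inner v⟩,
    intervalIntegral.integral_const_mul]
  congr 1
  exact (innerSL ℝ v).intervalIntegral_comp_comm hu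

lemma inner_convH_sub_norm_mul_conv (hk : AntitoneOn k (Icc 0 T))
    (hu : IntegrableOn u (Icc 0 T)) (u₀ v : 𝓗) {y : ℝ} (hy : y ∈ Icc 0 T) :
    ⟪v, convH k (fun τ => u τ - u₀) y⟫ - ‖v‖ * conv k (fun τ => ‖u τ‖ - ‖u₀‖) y
      = conv k (fun _ => ‖v‖ * ‖u₀‖ - ⟪v, u₀⟫) y
        - conv k (fun τ => ‖v‖ * ‖u τ‖ - ⟪v, u τ⟫) y := by
  have h₁ : IntervalIntegrable (fun τ => k (y - τ) • (u τ - u₀)) volume 0 y :=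
    hk.intervalIntegrable_comp_sub_smul (hu.sub (integrableOn_const measure_Icc_lt_top.ne)) hy
  have h₂ : IntervalIntegrable (fun τ => k (y - τ) * (‖u τ‖ - ‖u₀‖)) volume 0 y :=
    hk.intervalIntegrable_comp_sub_smul (hu.norm.sub (integrableOn_const measure_Icc_lt_top.ne)) hy
  have h₃ : IntervalIntegrable (fun _ => k (y - _) * (‖v‖ * ‖u₀‖ - ⟪v, u₀⟫)) volume 0 y :=
    hk.intervalIntegrable_comp_sub_smul (integrableOn_const measure_Icc_lt_top.ne) hy
  have h₄ : IntervalIntegrable (fun τ => k (y - τ) * (‖v‖ * ‖u τ‖ - ⟪v, u τ⟫)) volume 0 y :=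
    hk.intervalIntegrable_comp_sub_smul ((hu.norm.const_mul ‖v‖).sub (hu.const_inner v)) hy
  have hinner : ⟪v, ∫ τ in 0..y, k (y - τ) • (u τ - u₀)⟫
      = ∫ τ in 0..y, ⟪v, k (y - τ) • (u τ - u₀)⟫ :=
    ((innerSL ℝ v).intervalIntegral_comp_comm h₁).symm
  have h₁' : IntervalIntegrable (fun τ => ⟪v, k (y - τ) • (u τ - u₀)⟫) volume 0 y :=
    ⟨h₁.1.const_inner v, h₁.2.const_inner v⟩
  rw [conv, conv, conv, convH, hinner, ← intervalIntegral.integral_const_mul,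
    ← intervalIntegral.integral_sub h₁' (h₂.const_mul _),
    ← intervalIntegral.integral_sub h₃ h₄]
  congr 1
  ext τ
  simp only [inner_smul_right, inner_sub_right]
  ring

lemma monotoneOn_inner_convH_sub_norm_mul_conv_add (hk₀ : ∀ s ∈ Icc 0 T, 0 ≤ k s)
    (hk : AntitoneOn k (Icc 0 T)) (hu : IntegrableOn u (Icc 0 T)) (u₀ v : 𝓗) :
    MonotoneOn (fun y => ⟪v, convH k (fun τ => u τ - u₀) y⟫
      - ‖v‖ * conv k (fun τ => ‖u τ‖ - ‖u₀‖) y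
      + k 0 * (‖v‖ * (∫ τ in 0..y, ‖u τ‖) - ⟪v, ∫ τ in 0..y, u τ⟫)) (Icc 0 T) := by
  have hconst := monotoneOn_conv_const hk₀ (hk.integrableOn_isCompact isCompact_Icc)
    (sub_nonneg.2 (real_inner_le_norm v u₀))
  have hdefect := monotoneOn_mul_integral_sub_conv hk
    (a := fun τ => ‖v‖ * ‖u τ‖ - ⟪v, u τ⟫) ((hu.norm.const_mul ‖v‖).sub (hu.const_inner v))
    fun τ _ => sub_nonneg.2 (real_inner_le_norm v (u τ))
  refine (hconst.add hdefect).congr fun y hy => ?_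
  simp only [inner_convH_sub_norm_mul_conv hk hu u₀ v hy,
    integral_norm_mul_sub_inner (hu.intervalIntegrable_of_mem_Icc hy)]
  ring

end Hilbert

theorem hilbert_norm_inequality_general
    {𝓗 : Type*} [NormedAddCommGroup 𝓗] [InnerProductSpace ℝ 𝓗] [CompleteSpace 𝓗]
    (T : ℝ) (hT : 0 < T)
    (k : ℝ → ℝ)
    (hknn : ∀ t ∈ Icc (0:ℝ) T, 0 ≤ k t)
    (hkmono : AntitoneOn k (Icc 0 T))
    (u₀ : 𝓗) (u : ℝ → 𝓗) (hu : MemLp u 2 (volume.restrict (Icc 0 T)))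
    (D₁ : ℝ → 𝓗)
    (hD₁ : ∀ᵐ t ∂(volume.restrict (Ioo 0 T)),
      HasDerivAt (convH k (fun τ => u τ - u₀)) (D₁ t) t)
    (D₂ : ℝ → ℝ)
    (hD₂ : ∀ᵐ t ∂(volume.restrict (Ioo 0 T)),
      HasDerivAt (conv k (fun τ => ‖u τ‖ - ‖u₀‖)) (D₂ t) t) :
    ∀ᵐ t ∂(volume.restrict (Ioo 0 T)),
      ‖u t‖ * D₂ t ≤ (inner ℝ (u t) (D₁ t) : ℝ) := by
  have huI : IntegrableOn u (Icc 0 T) := hu.integrable one_le_two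
  have huT := huI.intervalIntegrable_of_mem_Icc (right_mem_Icc.2 hT.le)
  filter_upwards [hD₁, hD₂, ae_restrict_of_ae huT.ae_hasDerivAt_integral,
    ae_restrict_of_ae huT.norm.ae_hasDerivAt_integral, ae_restrict_mem measurableSet_Ioo]
    with t hD₁t hD₂t hUt hNt ht
  have htT : t ∈ uIcc 0 T := Icc_subset_uIcc (Ioo_subset_Icc_self ht)
  have hcorr := HasDerivAt.const_mul (k 0)
    (((hNt htT 0 left_mem_uIcc).const_mul ‖u t‖).sub
      ((hasDerivAt_const t (u t)).inner ℝ (hUt htT 0 left_mem_uIcc)))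
  have hderiv := (((hasDerivAt_const t (u t)).inner ℝ hD₁t).sub (hD₂t.const_mul ‖u t‖)).add hcorr
  have hnonneg := hderiv.nonneg_of_monotoneOn_of_mem_nhds
    (monotoneOn_inner_convH_sub_norm_mul_conv_add hknn hkmono huI u₀ (u t))
    (Icc_mem_nhds ht.1 ht.2)
  simp only [real_inner_self_eq_norm_mul_norm, inner_zero_left, add_zero, sub_self, mul_zero]
    at hnonneg
  linarith

/-- The Hilbert space version of the norm inequality (case `p = 2`) for
`∂ₜ(k ⋆ [· - u₀])` with a nonnegative, nonincreasing kernel `k ∈ H¹₁([0,T])`.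
The derivatives are encoded via `HasDerivAt` hypotheses. -/
theorem hilbert_norm_inequality
    {𝓗 : Type*} [NormedAddCommGroup 𝓗] [InnerProductSpace ℝ 𝓗] [CompleteSpace 𝓗]
    (T : ℝ) (hT : 0 < T)
    (k k' : ℝ → ℝ)
    (hknn : ∀ t ∈ Icc (0:ℝ) T, 0 ≤ k t)
    (hkmono : AntitoneOn k (Icc 0 T))
    (hk'int : IntegrableOn k' (Icc 0 T))
    (hkFTC : ∀ t ∈ Icc (0:ℝ) T, k t = k 0 + ∫ s in (0:ℝ)..t, k' s)
    (u₀ : 𝓗) (u : ℝ → 𝓗) (hu : MemLp u 2 (volume.restrict (Icc 0 T)))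
    (D₁ : ℝ → 𝓗)
    (hD₁ : ∀ᵐ t ∂(volume.restrict (Ioo 0 T)),
      HasDerivAt (convH k (fun τ => u τ - u₀)) (D₁ t) t)
    (D₂ : ℝ → ℝ)
    (hD₂ : ∀ᵐ t ∂(volume.restrict (Ioo 0 T)),
      HasDerivAt (conv k (fun τ => ‖u τ‖ - ‖u₀‖)) (D₂ t) t) :
    ∀ᵐ t ∂(volume.restrict (Ioo 0 T)),
      ‖u t‖ * D₂ t ≤ (inner ℝ (u t) (D₁ t) : ℝ) :=
  hilbert_norm_inequality_general T hT k hknn hkmono u₀ u hu D₁ hD₁ D₂ hD₂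
end

section
/- Let (k,l) be a pair of type PC and μ > 0, and let s_μ be the relaxation function: the nonnegative, nonincreasing, locally absolutely continuous solution of s_μ(t) + μ(l⋆s_μ)(t) = 1 on [0,∞) with s_μ(0) = 1. Then lim_{t→∞} s_μ(t) = 0 if and only if l ∉ L₁(ℝ₊). Moreover, if l ∈ L₁(ℝ₊), then lim_{t→∞} s_μ(t) = 1/(1 + μ‖l‖_{L₁(ℝ₊)}) > 0. -/
open MeasureTheory Set Filter

open Topology

/-!
Write `L = 1 ⋆ l` and `w = -s'`, so that `∫₀ᵗ w = 1 - s(t)` and `w ≥ 0` a.e. because `s` is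
nonincreasing. Substituting `s = 1 - 1 ⋆ w` into the Volterra equation and exchanging the order of
integration turns it into the renewal equation `μL = (1 - s) + w ⋆ (μL)`. If `c = lim s` is
positive, the kernel `w` has mass at most `1 - c < 1`, and a minimum principle shows that `μL` is
nonnegative, nondecreasing and bounded by `(1 - c)/c`; hence `l ≥ 0` a.e. and `l ∈ L₁(ℝ₊)`.
Conversely, if `l ∈ L₁(ℝ₊)`, dominated convergence in `μ (l ⋆ s) = 1 - s` gives
`μ c ‖l‖₁ = 1 - c`, so `c = 1/(1 + μ‖l‖₁) > 0`.
-/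

lemma integrableOn_Ioc_of_forall_pos {f : ℝ → ℝ} {a : ℝ}
    (hf : ∀ T, a < T → IntegrableOn f (Ioc a T)) (T : ℝ) : IntegrableOn f (Ioc a T) := by
  rcases lt_or_ge a T with h | h
  · exact hf T h
  · simp [Ioc_eq_empty (not_lt.2 h)]

lemma locallyIntegrable_indicator_Ioi {f : ℝ → ℝ} (hf : ∀ T, IntegrableOn f (Ioc 0 T)) :
    LocallyIntegrable ((Ioi (0:ℝ)).indicator f) := by
  refine (locallyIntegrable_iff (μ := volume)).2 fun K hK => ?_
  obtain ⟨T, hT⟩ := hK.isBounded.subset_closedBall 0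
  refine (((integrableOn_indicator_iff measurableSet_Ioi).2 ((hf T).mono_set ?_))).mono_set hT
  rintro x ⟨hx, hxT⟩
  rw [Real.closedBall_eq_Icc] at hxT
  exact ⟨hx, by linarith [hxT.2]⟩

lemma ae_nonneg_of_monotoneOn_primitive {f : ℝ → ℝ} (hf : ∀ T, IntegrableOn f (Ioc 0 T))
    (hmono : MonotoneOn (fun x => ∫ u in Ioc 0 x, f u) (Ici 0)) :
    ∀ᵐ x, 0 < x → 0 ≤ f x := by
  filter_upwards [LocallyIntegrable.ae_hasDerivAt_integral (locallyIntegrable_indicator_Ioi hf)]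
    with x hx hx0
  have hmono' : MonotoneOn (fun y => ∫ u in (0:ℝ)..y, (Ioi 0).indicator f u) (Ioi x) := by
    refine (hmono.mono fun y hy => le_of_lt (hx0.trans hy)).congr fun y hy => ?_
    rw [intervalIntegral.integral_of_le (hx0.trans hy).le, setIntegral_indicator measurableSet_Ioi,
      Ioc_inter_Ioi, max_self]
  have := (hx 0).hasDerivWithinAt.nonneg_of_monotoneOn
    (accPt_principal_iff_nhdsWithin.2 (by simpa using nhdsGT_neBot x)) hmono'
  rwa [indicator_of_mem (mem_Ioi.2 hx0)] at this

lemma integrableOn_Ioi_of_primitive_le {f : ℝ → ℝ} {B : ℝ} (hf : ∀ T, IntegrableOn f (Ioc 0 T))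
    (hf0 : ∀ᵐ x, 0 < x → 0 ≤ f x) (hB : ∀ x, 0 ≤ x → ∫ u in Ioc 0 x, f u ≤ B) :
    IntegrableOn f (Ioi 0) := by
  refine integrableOn_Ioi_of_intervalIntegral_norm_bounded B 0 hf tendsto_id ?_
  filter_upwards [eventually_ge_atTop 0] with x hx
  rw [intervalIntegral.integral_of_le hx]
  refine le_of_eq_of_le (setIntegral_congr_ae measurableSet_Ioc ?_) (hB x hx)
  filter_upwards [hf0] with u hu hux
  exact Real.norm_of_nonneg (hu hux.1)

lemma continuousOn_primitive_Ici {f : ℝ → ℝ} (hf : ∀ T, IntegrableOn f (Ioc 0 T)) :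
    ContinuousOn (fun x => ∫ u in Ioc 0 x, f u) (Ici 0) := by
  intro x hx
  have h := intervalIntegral.continuousOn_primitive
    ((integrableOn_Icc_iff_integrableOn_Ioc (by finiteness)).2 (hf (x + 1)))
    x ⟨hx, by linarith [mem_Ici.1 hx]⟩
  exact h.mono_of_mem_nhdsWithin (inter_mem_nhdsWithin _ (Iic_mem_nhds (lt_add_one x)))

lemma integrableOn_mul_comp_sub {w F : ℝ → ℝ} {t : ℝ} (hw : IntegrableOn w (Ioc 0 t))
    (hF : ContinuousOn F (Icc 0 t)) : IntegrableOn (fun τ => w τ * F (t - τ)) (Ioc 0 t) := by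
  have hF' : ContinuousOn (fun τ => F (t - τ)) (Icc 0 t) :=
    hF.comp (by fun_prop) fun τ hτ => ⟨by linarith [hτ.2], by linarith [hτ.1]⟩
  exact (((integrableOn_Icc_iff_integrableOn_Ioc (by finiteness)).2 hw).mul_continuousOn hF'
    isCompact_Icc).mono_set Ioc_subset_Icc_self

lemma exists_tendsto_of_antitoneOn_Ici {s : ℝ → ℝ} (hs : AntitoneOn s (Ici 0))
    (hs0 : ∀ t, 0 ≤ t → 0 ≤ s t) :
    ∃ c, Tendsto s atTop (𝓝 c) ∧ 0 ≤ c ∧ ∀ t, 0 ≤ t → c ≤ s t := by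
  have hanti : Antitone fun t => s (max t 0) := fun a b hab =>
    hs (le_max_right a 0) (le_max_right b 0) (max_le_max hab le_rfl)
  have hbdd : BddBelow (range fun t => s (max t 0)) :=
    ⟨0, forall_mem_range.2 fun t => hs0 _ (le_max_right t 0)⟩
  refine ⟨⨅ t, s (max t 0), (tendsto_atTop_ciInf hanti hbdd).congr' ?_,
    le_ciInf fun t => hs0 _ (le_max_right t 0), fun t ht => ?_⟩
  · filter_upwards [eventually_ge_atTop 0] with t ht
    rw [max_eq_left ht]
  · simpa [max_eq_left ht] using ciInf_le hbdd t

lemma conv_eq_integral_Ioc (f g : ℝ → ℝ) {t : ℝ} (ht : 0 ≤ t) :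
    conv f g t = ∫ u in Ioc 0 t, f u * g (t - u) := by
  have h := intervalIntegral.integral_comp_sub_left (fun u => f u * g (t - u)) t (a := 0) (b := t)
  simp only [sub_self, sub_zero, sub_sub_cancel] at h
  rw [conv, ← intervalIntegral.integral_of_le ht, ← h]

lemma integral_mul_primitive_comm {f g : ℝ → ℝ} {t : ℝ} (hf : IntegrableOn f (Ioc 0 t))
    (hg : IntegrableOn g (Ioc 0 t)) :
    ∫ u in Ioc 0 t, f u * ∫ τ in Ioc 0 (t - u), g τ
      = ∫ τ in Ioc 0 t, (∫ u in Ioc 0 (t - τ), f u) * g τ := by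
  set Φ : ℝ × ℝ → ℝ := {p | p.1 + p.2 ≤ t}.indicator fun p => f p.1 * g p.2
  have hΦ : Integrable Φ ((volume.restrict (Ioc 0 t)).prod (volume.restrict (Ioc 0 t))) :=
    (hf.mul_prod hg).indicator (measurableSet_le (by fun_prop) (by fun_prop))
  have hrow : ∀ u τ, Φ (u, τ) = f u * (Iic (t - u)).indicator g τ := by
    intro u τ
    simp only [Φ, indicator_apply, mem_ofPred_eq, mem_Iic, le_sub_iff_add_le']
    split_ifs <;> simp
  have hcol : ∀ u τ, Φ (u, τ) = (Iic (t - τ)).indicator f u * g τ := by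
    intro u τ
    simp only [Φ, indicator_apply, mem_ofPred_eq, mem_Iic, le_sub_iff_add_le]
    split_ifs <;> simp
  have hIoc : ∀ (h : ℝ → ℝ), ∀ x ∈ Ioc (0:ℝ) t,
      ∫ y in Ioc 0 t, (Iic (t - x)).indicator h y = ∫ y in Ioc 0 (t - x), h y := by
    intro h x hx
    rw [setIntegral_indicator measurableSet_Iic, Ioc_inter_Iic, min_eq_right (by linarith [hx.1])]
  calc ∫ u in Ioc 0 t, f u * ∫ τ in Ioc 0 (t - u), g τ
      = ∫ u in Ioc 0 t, ∫ τ in Ioc 0 t, Φ (u, τ) :=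
        setIntegral_congr_fun measurableSet_Ioc fun u hu => by
          simp only [hrow, integral_const_mul, hIoc g u hu]
    _ = ∫ τ in Ioc 0 t, ∫ u in Ioc 0 t, Φ (u, τ) := integral_integral_swap hΦ
    _ = ∫ τ in Ioc 0 t, (∫ u in Ioc 0 (t - τ), f u) * g τ :=
        setIntegral_congr_fun measurableSet_Ioc fun τ hτ => by
          simp only [hcol, integral_mul_const, hIoc f τ hτ]

lemma conv_one_add_primitive {f g h : ℝ → ℝ} {t : ℝ} (ht : 0 ≤ t) (hf : IntegrableOn f (Ioc 0 t))
    (hg : ∀ T, IntegrableOn g (Ioc 0 T)) (hh : ∀ x ∈ Icc 0 t, h x = 1 + ∫ τ in Ioc 0 x, g τ) :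
    conv f h t = (∫ u in Ioc 0 t, f u) + ∫ τ in Ioc 0 t, (∫ u in Ioc 0 (t - τ), f u) * g τ := by
  rw [conv_eq_integral_Ioc f h ht, ← integral_mul_primitive_comm hf (hg t), ← integral_add hf
    (integrableOn_mul_comp_sub hf ((continuousOn_primitive_Ici hg).mono Icc_subset_Ici_self))]
  refine setIntegral_congr_fun measurableSet_Ioc fun u hu => ?_
  rw [hh (t - u) ⟨by linarith [hu.2], by linarith [hu.1]⟩, mul_add, mul_one]

lemma tendsto_conv_atTop {f g : ℝ → ℝ} {c C : ℝ} (hf : IntegrableOn f (Ioi 0))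
    (hg : ContinuousOn g (Ici 0)) (hgC : ∀ t, 0 ≤ t → |g t| ≤ C) (hlim : Tendsto g atTop (𝓝 c)) :
    Tendsto (conv f g) atTop (𝓝 ((∫ u in Ioi 0, f u) * c)) := by
  set G : ℝ → ℝ → ℝ := fun t => (Ioc 0 t).indicator fun u => f u * g (t - u)
  have hC : 0 ≤ C := (abs_nonneg _).trans (hgC 0 le_rfl)
  have hmeas : ∀ᶠ t in atTop, AEStronglyMeasurable (G t) (volume.restrict (Ioi 0)) := by
    filter_upwards [eventually_ge_atTop 0] with t ht
    exact ((integrableOn_mul_comp_sub (hf.mono_set Ioc_subset_Ioi_self)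
      (hg.mono Icc_subset_Ici_self)).integrable_indicator
        measurableSet_Ioc).aestronglyMeasurable.restrict
  have hbound : ∀ᶠ t in atTop, ∀ᵐ u ∂volume.restrict (Ioi 0), ‖G t u‖ ≤ ‖f u‖ * C := by
    filter_upwards [eventually_ge_atTop 0] with t ht
    refine Eventually.of_forall fun u => ?_
    simp only [G]
    by_cases hu : u ∈ Ioc 0 t
    · rw [indicator_of_mem hu, norm_mul, Real.norm_eq_abs (g _)]
      exact mul_le_mul_of_nonneg_left (hgC _ (by linarith [hu.2])) (norm_nonneg _)
    · rw [indicator_of_notMem hu, norm_zero]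
      positivity
  have hpointwise : ∀ᵐ u ∂volume.restrict (Ioi 0), Tendsto (G · u) atTop (𝓝 (f u * c)) := by
    filter_upwards [ae_restrict_mem measurableSet_Ioi] with u hu
    have hshift : Tendsto (fun t => t - u) atTop atTop :=
      (tendsto_atTop_add_const_right _ (-u) tendsto_id).congr fun t => (sub_eq_add_neg t u).symm
    refine ((hlim.comp hshift).const_mul (f u)).congr' ?_
    filter_upwards [eventually_ge_atTop u] with t ht
    simp only [G, indicator_of_mem (mem_Ioc.2 ⟨hu, ht⟩), Function.comp_apply]
  rw [← integral_mul_const]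
  refine (tendsto_integral_filter_of_dominated_convergence _ hmeas hbound
    (hf.norm.mul_const C) hpointwise).congr' ?_
  filter_upwards [eventually_ge_atTop 0] with t ht
  rw [setIntegral_indicator measurableSet_Ioc, inter_eq_self_of_subset_right Ioc_subset_Ioi_self,
    conv_eq_integral_Ioc f g ht]

-- Minimum principle: at a negative minimum, `(w ⋆ F)(t₀) ≥ (∫₀^t₀ w) F(t₀) > F(t₀)`.
lemma nonneg_of_integral_mul_comp_sub_le {w F : ℝ → ℝ} {a : ℝ} (hw : IntegrableOn w (Ioc 0 a))
    (hw0 : ∀ᵐ τ, 0 < τ → 0 ≤ w τ) (hw1 : ∀ t ∈ Icc 0 a, ∫ τ in Ioc 0 t, w τ < 1)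
    (hF : ContinuousOn F (Icc 0 a))
    (hle : ∀ t ∈ Icc 0 a, ∫ τ in Ioc 0 t, w τ * F (t - τ) ≤ F t) :
    ∀ t ∈ Icc 0 a, 0 ≤ F t := by
  intro t ht
  obtain ⟨t₀, ht₀, hmin⟩ := isCompact_Icc.exists_isMinOn ⟨t, ht⟩ hF
  refine le_trans ?_ (hmin ht)
  by_contra! hneg
  have hw₀ : IntegrableOn w (Ioc 0 t₀) := hw.mono_set (Ioc_subset_Ioc_right ht₀.2)
  have hmass : (∫ τ in Ioc 0 t₀, w τ) * F t₀ ≤ ∫ τ in Ioc 0 t₀, w τ * F (t₀ - τ) := by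
    rw [← integral_mul_const]
    refine integral_mono_ae (hw₀.mul_const _)
      (integrableOn_mul_comp_sub hw₀ (hF.mono (Icc_subset_Icc_right ht₀.2))) ?_
    filter_upwards [ae_restrict_mem measurableSet_Ioc, ae_restrict_of_ae hw0] with τ hτ hwτ
    exact mul_le_mul_of_nonneg_left
      (hmin ⟨by linarith [hτ.2], by linarith [hτ.1, ht₀.2]⟩) (hwτ hτ.1)
  nlinarith [hle t₀ ht₀, hw1 t₀ ht₀]

section RenewalEquation

variable {w F : ℝ → ℝ} {c : ℝ}

lemma renewal_nonneg (hw : ∀ T, IntegrableOn w (Ioc 0 T)) (hw0 : ∀ᵐ τ, 0 < τ → 0 ≤ w τ)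
    (hwc : ∀ t, 0 ≤ t → ∫ τ in Ioc 0 t, w τ ≤ 1 - c) (hc : 0 < c) (hF : ContinuousOn F (Ici 0))
    (hren : ∀ t, 0 ≤ t → F t = (∫ τ in Ioc 0 t, w τ) + ∫ τ in Ioc 0 t, w τ * F (t - τ))
    {t : ℝ} (ht : 0 ≤ t) : 0 ≤ F t := by
  refine nonneg_of_integral_mul_comp_sub_le (hw t) hw0 (fun x hx => by linarith [hwc x hx.1])
    (hF.mono Icc_subset_Ici_self) (fun x hx => ?_) t ⟨ht, le_rfl⟩
  have hmass : 0 ≤ ∫ τ in Ioc 0 x, w τ := integral_nonneg_of_ae <| by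
    filter_upwards [ae_restrict_mem measurableSet_Ioc, ae_restrict_of_ae hw0] with τ hτ hwτ
    exact hwτ hτ.1
  linarith [hren x hx.1]

lemma renewal_le (hw : ∀ T, IntegrableOn w (Ioc 0 T)) (hw0 : ∀ᵐ τ, 0 < τ → 0 ≤ w τ)
    (hwc : ∀ t, 0 ≤ t → ∫ τ in Ioc 0 t, w τ ≤ 1 - c) (hc : 0 < c) (hF : ContinuousOn F (Ici 0))
    (hren : ∀ t, 0 ≤ t → F t = (∫ τ in Ioc 0 t, w τ) + ∫ τ in Ioc 0 t, w τ * F (t - τ))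
    {t : ℝ} (ht : 0 ≤ t) : F t ≤ (1 - c) / c := by
  set B := (1 - c) / c
  suffices 0 ≤ B - F t by linarith
  refine nonneg_of_integral_mul_comp_sub_le (hw t) hw0 (fun x hx => by linarith [hwc x hx.1])
    (continuousOn_const.sub (hF.mono Icc_subset_Ici_self)) (fun x hx => ?_) t ⟨ht, le_rfl⟩
  have hB : (∫ τ in Ioc 0 x, w τ) * (B + 1) ≤ B := by
    rw [div_add_one hc.ne', mul_div_assoc']
    exact div_le_div_of_nonneg_right (by linarith [hwc x hx.1]) hc.le
  show ∫ τ in Ioc 0 x, w τ * (B - F (x - τ)) ≤ B - F x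
  simp only [mul_sub]
  rw [integral_sub ((hw x).mul_const B)
    (integrableOn_mul_comp_sub (hw x) ((hF.mono Icc_subset_Ici_self))), integral_mul_const]
  linarith [hren x hx.1]

lemma renewal_monotoneOn (hw : ∀ T, IntegrableOn w (Ioc 0 T)) (hw0 : ∀ᵐ τ, 0 < τ → 0 ≤ w τ)
    (hwc : ∀ t, 0 ≤ t → ∫ τ in Ioc 0 t, w τ ≤ 1 - c) (hc : 0 < c) (hF : ContinuousOn F (Ici 0))
    (hren : ∀ t, 0 ≤ t → F t = (∫ τ in Ioc 0 t, w τ) + ∫ τ in Ioc 0 t, w τ * F (t - τ)) :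
    MonotoneOn F (Ici 0) := by
  intro a ha b _ hab
  set d := b - a
  have hd : 0 ≤ d := sub_nonneg.2 hab
  suffices ∀ t ∈ Icc 0 a, 0 ≤ F (t + d) - F t by
    simpa [d] using this a ⟨ha, le_rfl⟩
  have hFd : ContinuousOn (fun t => F (t + d)) (Icc 0 a) :=
    hF.comp (by fun_prop) fun t ht => mem_Ici.2 (by linarith [ht.1])
  refine nonneg_of_integral_mul_comp_sub_le (hw a) hw0 (fun x hx => by linarith [hwc x hx.1])
    (hFd.sub (hF.mono Icc_subset_Ici_self)) (fun t ht => ?_)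
  show ∫ τ in Ioc 0 t, w τ * (F (t - τ + d) - F (t - τ)) ≤ F (t + d) - F t
  have ht0 : 0 ≤ t := ht.1
  have htd : 0 ≤ t + d := by linarith
  have hsplit : ∀ φ : ℝ → ℝ, IntegrableOn φ (Ioc 0 (t + d)) →
      ∫ τ in Ioc 0 (t + d), φ τ = (∫ τ in Ioc 0 t, φ τ) + ∫ τ in Ioc t (t + d), φ τ := by
    intro φ hφ
    rw [← setIntegral_union (Ioc_disjoint_Ioc_of_le le_rfl) measurableSet_Ioc
      (hφ.mono_set (Ioc_subset_Ioc_right (by linarith))) (hφ.mono_set (Ioc_subset_Ioc_left ht0)),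
      Ioc_union_Ioc_eq_Ioc ht0 (by linarith)]
  have hI : IntegrableOn (fun τ => w τ * F (t + d - τ)) (Ioc 0 (t + d)) :=
    integrableOn_mul_comp_sub (hw _) (hF.mono Icc_subset_Ici_self)
  have hshift : ∫ τ in Ioc 0 t, w τ * (F (t - τ + d) - F (t - τ))
      = (∫ τ in Ioc 0 t, w τ * F (t + d - τ)) - ∫ τ in Ioc 0 t, w τ * F (t - τ) := by
    rw [← integral_sub (hI.mono_set (Ioc_subset_Ioc_right (by linarith)))
      (integrableOn_mul_comp_sub (hw t) (hF.mono Icc_subset_Ici_self))]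
    simp only [mul_sub, sub_add_eq_add_sub]
  have hmass : 0 ≤ ∫ τ in Ioc t (t + d), w τ := integral_nonneg_of_ae <| by
    filter_upwards [ae_restrict_mem measurableSet_Ioc, ae_restrict_of_ae hw0] with τ hτ hwτ
    exact hwτ (ht0.trans_lt hτ.1)
  have htail : 0 ≤ ∫ τ in Ioc t (t + d), w τ * F (t + d - τ) := integral_nonneg_of_ae <| by
    filter_upwards [ae_restrict_mem measurableSet_Ioc, ae_restrict_of_ae hw0] with τ hτ hwτ
    exact mul_nonneg (hwτ (ht0.trans_lt hτ.1))
      (renewal_nonneg hw hw0 hwc hc hF hren (by linarith [hτ.2]))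
  have hrend := hren (t + d) htd
  rw [hsplit _ (hw _), hsplit _ hI] at hrend
  linarith [hren t ht0]

end RenewalEquation

section Relaxation

variable {l s s' : ℝ → ℝ} {μ : ℝ}

lemma relaxation_renewal_equation (hl : ∀ T, IntegrableOn l (Ioc 0 T))
    (hs' : ∀ T, IntegrableOn s' (Ioc 0 T)) (hsFTC : ∀ t, 0 ≤ t → s t = 1 + ∫ τ in Ioc 0 t, s' τ)
    (hVolterra : ∀ t, 0 ≤ t → s t + μ * conv l s t = 1) {t : ℝ} (ht : 0 ≤ t) :
    μ * ∫ u in Ioc 0 t, l u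
      = (∫ τ in Ioc 0 t, -s' τ) + ∫ τ in Ioc 0 t, -s' τ * (μ * ∫ u in Ioc 0 (t - τ), l u) := by
  have hmix : ∫ τ in Ioc 0 t, -s' τ * (μ * ∫ u in Ioc 0 (t - τ), l u)
      = -(μ * ∫ τ in Ioc 0 t, (∫ u in Ioc 0 (t - τ), l u) * s' τ) := by
    rw [← integral_const_mul, ← integral_neg]
    congr 1 with τ
    ring
  have hv := hVolterra t ht
  rw [hsFTC t ht, conv_one_add_primitive ht (hl t) hs' fun x hx => hsFTC x hx.1] at hv
  rw [hmix, integral_neg]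
  linarith

lemma relaxation_kernel_nonneg_integrableOn (hμ : 0 < μ) (hl : ∀ T, IntegrableOn l (Ioc 0 T))
    (hs' : ∀ T, IntegrableOn s' (Ioc 0 T)) (hsFTC : ∀ t, 0 ≤ t → s t = 1 + ∫ τ in Ioc 0 t, s' τ)
    (hsmono : AntitoneOn s (Ici 0)) (hVolterra : ∀ t, 0 ≤ t → s t + μ * conv l s t = 1)
    {c : ℝ} (hc : 0 < c) (hcs : ∀ t, 0 ≤ t → c ≤ s t) :
    (∀ᵐ x, 0 < x → 0 ≤ l x) ∧ IntegrableOn l (Ioi 0) := by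
  have hw : ∀ T, IntegrableOn (fun τ => -s' τ) (Ioc 0 T) := fun T => (hs' T).neg
  have hmass : ∀ t, 0 ≤ t → ∫ τ in Ioc 0 t, -s' τ = 1 - s t := fun t ht => by
    rw [integral_neg, hsFTC t ht]
    ring
  have hw0 : ∀ᵐ τ, 0 < τ → 0 ≤ -s' τ := ae_nonneg_of_monotoneOn_primitive hw
    fun a ha b hb hab => by
      simp only [hmass a ha, hmass b hb, sub_le_sub_iff_left, hsmono ha hb hab]
  have hwc : ∀ t, 0 ≤ t → ∫ τ in Ioc 0 t, -s' τ ≤ 1 - c := fun t ht => by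
    rw [hmass t ht]
    linarith [hcs t ht]
  have hF : ContinuousOn (fun x => μ * ∫ u in Ioc 0 x, l u) (Ici 0) :=
    continuousOn_const.mul (continuousOn_primitive_Ici hl)
  have hren := fun t => relaxation_renewal_equation (μ := μ) hl hs' hsFTC hVolterra (t := t)
  have hl0 : ∀ᵐ x, 0 < x → 0 ≤ l x := ae_nonneg_of_monotoneOn_primitive hl fun a ha b hb hab =>
    le_of_mul_le_mul_left (renewal_monotoneOn hw hw0 hwc hc hF hren ha hb hab) hμ
  refine ⟨hl0, integrableOn_Ioi_of_primitive_le hl hl0 (B := (1 - c) / c / μ) fun x hx => ?_⟩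
  rw [le_div_iff₀ hμ, mul_comm]
  exact renewal_le hw hw0 hwc hc hF hren hx

lemma relaxation_limit_mul_eq_one (hμ : 0 < μ) (hs' : ∀ T, IntegrableOn s' (Ioc 0 T))
    (hsFTC : ∀ t, 0 ≤ t → s t = 1 + ∫ τ in Ioc 0 t, s' τ) (hsnn : ∀ t, 0 ≤ t → 0 ≤ s t)
    (hsmono : AntitoneOn s (Ici 0)) (hVolterra : ∀ t, 0 ≤ t → s t + μ * conv l s t = 1)
    {c : ℝ} (hlim : Tendsto s atTop (𝓝 c)) (hl : IntegrableOn l (Ioi 0)) :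
    c * (1 + μ * ∫ t in Ioi 0, l t) = 1 := by
  have hs_cont : ContinuousOn s (Ici 0) :=
    (continuousOn_const.add (continuousOn_primitive_Ici hs')).congr fun t ht => hsFTC t ht
  have hs_abs : ∀ t, 0 ≤ t → |s t| ≤ 1 := fun t ht => by
    rw [abs_of_nonneg (hsnn t ht)]
    simpa [hsFTC 0 le_rfl] using hsmono self_mem_Ici ht ht
  have hconv : Tendsto (conv l s) atTop (𝓝 ((1 - c) / μ)) := by
    refine ((tendsto_const_nhds.sub hlim).div_const μ).congr' ?_
    filter_upwards [eventually_ge_atTop 0] with t ht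
    rw [div_eq_iff hμ.ne']
    linarith [hVolterra t ht]
  have h := tendsto_nhds_unique (tendsto_conv_atTop hl hs_cont hs_abs hlim) hconv
  rw [eq_div_iff hμ.ne'] at h
  linarith

end Relaxation

theorem relaxation_function_limit_general
    (k l : ℝ → ℝ) (hPC : IsPCPair k l) (μ : ℝ) (hμ : 0 < μ)
    (s s' : ℝ → ℝ)
    (hsnn : ∀ t, 0 ≤ t → 0 ≤ s t)
    (hsmono : AntitoneOn s (Ici 0))
    (hs'int : ∀ T, 0 < T → IntegrableOn s' (Icc 0 T))
    (hsFTC : ∀ t, 0 ≤ t → s t = 1 + ∫ τ in (0:ℝ)..t, s' τ)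
    (hVolterra : ∀ t, 0 ≤ t → s t + μ * conv l s t = 1) :
    (Tendsto s atTop (nhds 0) ↔ ¬ IntegrableOn l (Ioi 0)) ∧
    (IntegrableOn l (Ioi 0) →
      Tendsto s atTop (nhds (1 / (1 + μ * ∫ t in Ioi (0:ℝ), |l t|))) ∧
      0 < 1 / (1 + μ * ∫ t in Ioi (0:ℝ), |l t|)) := by
  obtain ⟨-, -, -, hl, -⟩ := hPC
  have hl' := integrableOn_Ioc_of_forall_pos hl
  have hs' : ∀ T, IntegrableOn s' (Ioc 0 T) := integrableOn_Ioc_of_forall_pos fun T hT =>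
    (hs'int T hT).mono_set Ioc_subset_Icc_self
  have hsFTC' : ∀ t, 0 ≤ t → s t = 1 + ∫ τ in Ioc 0 t, s' τ := fun t ht => by
    rw [hsFTC t ht, intervalIntegral.integral_of_le ht]
  obtain ⟨c, hlim, hc0, hcs⟩ := exists_tendsto_of_antitoneOn_Ici hsmono hsnn
  have hc_eq := relaxation_limit_mul_eq_one hμ hs' hsFTC' hsnn hsmono hVolterra hlim
  have hc_pos : IntegrableOn l (Ioi 0) → 0 < c := fun hint =>
    hc0.lt_of_ne fun h => by simpa [← h] using hc_eq hint
  have hkernel := fun hc => relaxation_kernel_nonneg_integrableOn hμ hl' hs' hsFTC' hsmono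
    hVolterra hc hcs
  refine ⟨⟨fun h0 hint => (hc_pos hint).ne' (tendsto_nhds_unique hlim h0), fun hnint => ?_⟩,
    fun hint => ?_⟩
  · obtain rfl : 0 = c := hc0.eq_of_not_lt fun hc => hnint (hkernel hc).2
    exact hlim
  · have habs : ∫ t in Ioi 0, |l t| = ∫ t in Ioi 0, l t := by
      refine setIntegral_congr_ae measurableSet_Ioi ?_
      filter_upwards [(hkernel (hc_pos hint)).1] with x hx hx0
      exact abs_of_nonneg (hx hx0)
    rw [habs, ← eq_one_div_of_mul_eq_one_left (hc_eq hint)]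
    exact ⟨hlim, hc_pos hint⟩

/-- The relaxation function `s_μ` tends to `0` at infinity if and only if
`l ∉ L₁(ℝ₊)`; if `l ∈ L₁(ℝ₊)` then `s_μ(t) → 1/(1 + μ‖l‖_{L₁(ℝ₊)}) > 0`. -/
theorem relaxation_function_limit
    (k l : ℝ → ℝ) (hPC : IsPCPair k l) (μ : ℝ) (hμ : 0 < μ)
    (s s' : ℝ → ℝ)
    (hs0 : s 0 = 1)
    (hsnn : ∀ t, 0 ≤ t → 0 ≤ s t)
    (hsmono : AntitoneOn s (Ici 0))
    (hs'int : ∀ T, 0 < T → IntegrableOn s' (Icc 0 T))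
    (hsFTC : ∀ t, 0 ≤ t → s t = 1 + ∫ τ in (0:ℝ)..t, s' τ)
    (hVolterra : ∀ t, 0 ≤ t → s t + μ * conv l s t = 1) :
    (Tendsto s atTop (nhds 0) ↔ ¬ IntegrableOn l (Ioi 0)) ∧
    (IntegrableOn l (Ioi 0) →
      Tendsto s atTop (nhds (1 / (1 + μ * ∫ t in Ioi (0:ℝ), |l t|))) ∧
      0 < 1 / (1 + μ * ∫ t in Ioi (0:ℝ), |l t|)) :=
  relaxation_function_limit_general k l hPC μ hμ s s' hsnn hsmono hs'int hsFTC hVolterra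
end

section
/- PC pairs are stable under exponential shifts: let (k,l) be a pair of type PC and μ ≥ 0. Define k_μ(t) = k(t)e^{−μt} and l_μ(t) = l(t)e^{−μt} for t > 0. Then k_μ is nonnegative, nonincreasing and locally integrable, the function l_μ + μ(1⋆l_μ) is locally integrable, and (k_μ ⋆ [l_μ + μ(1⋆l_μ)])(t) = 1 for all t ∈ (0,∞); that is, the pair (k_μ, l_μ + μ(1⋆l_μ)) is of type PC. -/
open MeasureTheory Set Real

/-!
Multiplying both kernels by `e^{-μt}` multiplies their convolution by `e^{-μt}`, so
`k_μ ⋆ l_μ = e^{-μt}`. Fubini on the triangle `0 < σ < τ ≤ t` gives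
`k_μ ⋆ (1 ⋆ l_μ) = 1 ⋆ (k_μ ⋆ l_μ)`, hence
`k_μ ⋆ μ(1 ⋆ l_μ) = μ ∫₀ᵗ e^{-μs} ds = 1 - e^{-μt}`, and the two pieces add up to `1`.
-/

def triangle (t : ℝ) : Set (ℝ × ℝ) := {p | p.2 < p.1} ∩ Ioc 0 t ×ˢ Ioc 0 t

theorem measurableSet_triangle (t : ℝ) : MeasurableSet (triangle t) :=
  (measurableSet_lt measurable_snd measurable_fst).inter (measurableSet_Ioc.prod measurableSet_Ioc)

theorem integral_integral_swap_triangle {h : ℝ → ℝ → ℝ} {t : ℝ} (ht : 0 ≤ t)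
    (hh : IntegrableOn (Function.uncurry h) (triangle t)) :
    ∫ x in (0:ℝ)..t, ∫ σ in (0:ℝ)..x, h x σ =
      ∫ σ in (0:ℝ)..t, ∫ x in σ..t, h x σ := by
  set H : ℝ → ℝ → ℝ := fun x σ => (Iio x).indicator (h x) σ
  have hH : Integrable (Function.uncurry H)
      ((volume.restrict (Ioc 0 t)).prod (volume.restrict (Ioc 0 t))) := by
    rw [Measure.prod_restrict, ← Measure.volume_eq_prod]
    have : Function.uncurry H = {p : ℝ × ℝ | p.2 < p.1}.indicator (Function.uncurry h) := by
      ext ⟨x, σ⟩; simp [H, indicator_apply]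
    rw [this]
    exact (integrableOn_indicator_iff (measurableSet_lt measurable_snd measurable_fst)).2 hh
  calc ∫ x in (0:ℝ)..t, ∫ σ in (0:ℝ)..x, h x σ
      = ∫ x in Ioc 0 t, ∫ σ in Ioc 0 t, H x σ := by
        rw [intervalIntegral.integral_of_le ht]
        refine setIntegral_congr_fun measurableSet_Ioc fun x hx => ?_
        have : Ioc 0 t ∩ Iio x = Ioo 0 x := by
          ext σ; simp only [mem_inter_iff, mem_Ioc, mem_Iio, mem_Ioo]; grind [hx.2]
        rw [setIntegral_indicator measurableSet_Iio, this, intervalIntegral.integral_of_le hx.1.le,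
          integral_Ioc_eq_integral_Ioo]
    _ = ∫ σ in Ioc 0 t, ∫ x in Ioc 0 t, H x σ := integral_integral_swap hH
    _ = ∫ σ in (0:ℝ)..t, ∫ x in σ..t, h x σ := by
        rw [intervalIntegral.integral_of_le ht]
        refine setIntegral_congr_fun measurableSet_Ioc fun σ hσ => ?_
        have hslice : (fun x => H x σ) = (Ioi σ).indicator (fun x => h x σ) := by
          ext x; simp [H, indicator_apply]
        have : Ioc 0 t ∩ Ioi σ = Ioc σ t := by
          ext x; simp only [mem_inter_iff, mem_Ioc, mem_Ioi]; grind [hσ.1]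
        rw [hslice, setIntegral_indicator measurableSet_Ioi, this,
          intervalIntegral.integral_of_le hσ.2]

variable {f g : ℝ → ℝ} {t : ℝ}

theorem integrableOn_Ioc_comp_sub_left (ht : 0 ≤ t) (hf : IntegrableOn f (Ioc 0 t)) :
    IntegrableOn (fun τ => f (t - τ)) (Ioc 0 t) := by
  rw [← intervalIntegrable_iff_integrableOn_Ioc_of_le ht] at hf ⊢
  simpa using (hf.comp_sub_left t).symm

theorem integrableOn_triangle_comp_sub (hf : IntegrableOn f (Ioc 0 t))
    (hg : IntegrableOn g (Ioc 0 t)) :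
    IntegrableOn (fun p : ℝ × ℝ => f (p.1 - p.2) * g p.2) (triangle t) := by
  have hprod : Integrable ((Ioc 0 t ×ˢ Ioc 0 t).indicator fun p : ℝ × ℝ => f p.1 * g p.2)
      (volume.prod volume) := by
    rw [integrable_indicator_iff (measurableSet_Ioc.prod measurableSet_Ioc), IntegrableOn,
      ← Measure.prod_restrict]
    exact hf.mul_prod hg
  refine ((measurePreserving_sub_prod volume volume).integrable_comp_of_integrable
    hprod).integrableOn.congr_fun (fun p hp => ?_) (measurableSet_triangle t)
  obtain ⟨hlt, ⟨hx0, hxt⟩, hσ0, hσt⟩ := hp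
  have : (p.1 - p.2, p.2) ∈ Ioc 0 t ×ˢ Ioc 0 t :=
    ⟨⟨sub_pos.2 hlt, (sub_le_self _ hσ0.le).trans hxt⟩, hσ0, hσt⟩
  simp [indicator_of_mem this]

theorem integrableOn_triangle_comp_sub_left (ht : 0 ≤ t) (hf : IntegrableOn f (Ioc 0 t))
    (hg : IntegrableOn g (Ioc 0 t)) :
    IntegrableOn (fun p : ℝ × ℝ => f (t - p.1) * g p.2) (triangle t) := by
  have : IntegrableOn (fun p : ℝ × ℝ => f (t - p.1) * g p.2) (Ioc 0 t ×ˢ Ioc 0 t) := by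
    rw [IntegrableOn, Measure.volume_eq_prod, ← Measure.prod_restrict]
    exact (integrableOn_Ioc_comp_sub_left ht hf).mul_prod hg
  exact this.mono_set inter_subset_right

theorem integral_conv_eq_conv_primitive (ht : 0 ≤ t) (hf : IntegrableOn f (Ioc 0 t))
    (hg : IntegrableOn g (Ioc 0 t)) :
    ∫ s in (0:ℝ)..t, conv f g s = conv f (fun τ => ∫ σ in (0:ℝ)..τ, g σ) t :=
  calc ∫ s in (0:ℝ)..t, conv f g s
      = ∫ σ in (0:ℝ)..t, ∫ s in σ..t, f (s - σ) * g σ :=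
        integral_integral_swap_triangle ht (integrableOn_triangle_comp_sub hf hg)
    _ = ∫ σ in (0:ℝ)..t, (∫ u in (0:ℝ)..t - σ, f u) * g σ := by
        simp_rw [intervalIntegral.integral_mul_const, intervalIntegral.integral_comp_sub_right,
          sub_self]
    _ = ∫ σ in (0:ℝ)..t, ∫ τ in σ..t, f (t - τ) * g σ := by
        simp_rw [intervalIntegral.integral_mul_const, intervalIntegral.integral_comp_sub_left,
          sub_self]
    _ = ∫ τ in (0:ℝ)..t, ∫ σ in (0:ℝ)..τ, f (t - τ) * g σ :=
        (integral_integral_swap_triangle (h := fun τ σ => f (t - τ) * g σ) ht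
          (integrableOn_triangle_comp_sub_left ht hf hg)).symm
    _ = conv f (fun τ => ∫ σ in (0:ℝ)..τ, g σ) t := by
        simp_rw [intervalIntegral.integral_const_mul]; rfl

theorem conv_mul_exp (c : ℝ) (f g : ℝ → ℝ) (t : ℝ) :
    conv (fun s => f s * exp (c * s)) (fun s => g s * exp (c * s)) t =
      exp (c * t) * conv f g t := by
  rw [conv, conv, ← intervalIntegral.integral_const_mul]
  congr 1 with τ
  rw [show c * t = c * (t - τ) + c * τ by ring, exp_add]
  ring

theorem conv_add_right {h : ℝ → ℝ}
    (hg : IntervalIntegrable (fun τ => f (t - τ) * g τ) volume 0 t)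
    (hh : IntervalIntegrable (fun τ => f (t - τ) * h τ) volume 0 t) :
    conv f (fun τ => g τ + h τ) t = conv f g t + conv f h t := by
  simp_rw [conv, mul_add]
  exact intervalIntegral.integral_add hg hh

theorem conv_const_mul_right (c : ℝ) : conv f (fun τ => c * g τ) t = c * conv f g t := by
  simp_rw [conv, mul_left_comm _ c]
  exact intervalIntegral.integral_const_mul c _

theorem integrableOn_Ioc_mul_exp (c : ℝ) (hf : IntegrableOn f (Ioc 0 t)) :
    IntegrableOn (fun s => f s * exp (c * s)) (Ioc 0 t) :=
  hf.mul_continuousOn_of_subset (by fun_prop) measurableSet_Ioc isCompact_Icc Ioc_subset_Icc_self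

theorem continuousOn_primitive_Icc (ht : 0 ≤ t) (hg : IntegrableOn g (Ioc 0 t)) :
    ContinuousOn (fun s => ∫ σ in (0:ℝ)..s, g σ) (Icc 0 t) := by
  rw [← uIcc_of_le ht]
  refine intervalIntegral.continuousOn_primitive_interval ?_
  rwa [uIcc_of_le ht, integrableOn_Icc_iff_integrableOn_Ioc]

theorem integrableOn_Ioc_add_mul_primitive (ht : 0 ≤ t) (c : ℝ)
    (hg : IntegrableOn g (Ioc 0 t)) :
    IntegrableOn (fun s => g s + c * ∫ σ in (0:ℝ)..s, g σ) (Ioc 0 t) :=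
  hg.add ((continuousOn_const.mul (continuousOn_primitive_Icc ht hg)).integrableOn_Icc.mono_set
    Ioc_subset_Icc_self)

theorem conv_add_mul_primitive (ht : 0 ≤ t) (c : ℝ) (hf : IntegrableOn f (Ioc 0 t))
    (hg : IntegrableOn g (Ioc 0 t))
    (hfg : IntervalIntegrable (fun τ => f (t - τ) * g τ) volume 0 t) :
    conv f (fun τ => g τ + c * ∫ σ in (0:ℝ)..τ, g σ) t =
      conv f g t + c * ∫ s in (0:ℝ)..t, conv f g s := by
  have hfG :
      IntervalIntegrable (fun τ => f (t - τ) * (c * ∫ σ in (0:ℝ)..τ, g σ)) volume 0 t :=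
    (intervalIntegrable_iff_integrableOn_Ioc_of_le ht).2 <|
      (integrableOn_Ioc_comp_sub_left ht hf).mul_continuousOn_of_subset
        (continuousOn_const.mul (continuousOn_primitive_Icc ht hg)) measurableSet_Ioc
        isCompact_Icc Ioc_subset_Icc_self
  rw [conv_add_right hfg hfG, conv_const_mul_right, integral_conv_eq_conv_primitive ht hf hg]

theorem mul_integral_exp_neg_mul (μ t : ℝ) :
    μ * ∫ s in (0:ℝ)..t, exp (-μ * s) = 1 - exp (-μ * t) := by
  have hderiv : ∀ s ∈ uIcc 0 t, HasDerivAt (fun s => -exp (-μ * s)) (μ * exp (-μ * s)) s :=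
    fun s _ => (((hasDerivAt_id' s).const_mul (-μ)).exp.neg).congr_deriv (by ring)
  rw [← intervalIntegral.integral_const_mul,
    intervalIntegral.integral_eq_sub_of_hasDerivAt hderiv
      (Continuous.intervalIntegrable (by fun_prop) _ _), mul_zero, exp_zero]
  ring

/-- Stability of `PC` pairs under exponential shifts: if `(k,l) ∈ PC` and `μ ≥ 0`,
then `(k·e^{-μ·}, l·e^{-μ·} + μ(1 ⋆ l·e^{-μ·})) ∈ PC`. -/
theorem pc_pair_exponential_shift
    (k l : ℝ → ℝ) (hPC : IsPCPair k l) (μ : ℝ) (hμ : 0 ≤ μ) :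
    IsPCPair (fun t => k t * Real.exp (-μ * t))
      (fun t => l t * Real.exp (-μ * t) +
        μ * ∫ τ in (0:ℝ)..t, l τ * Real.exp (-μ * τ)) := by
  obtain ⟨hk_nonneg, hk_anti, hk_int, hl_int, hkl⟩ := hPC
  set kμ : ℝ → ℝ := fun t => k t * exp (-μ * t)
  set lμ : ℝ → ℝ := fun t => l t * exp (-μ * t)
  have hkμ_int := fun T (hT : 0 < T) => integrableOn_Ioc_mul_exp (-μ) (hk_int T hT)
  have hlμ_int := fun T (hT : 0 < T) => integrableOn_Ioc_mul_exp (-μ) (hl_int T hT)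
  have hkμlμ : ∀ s, 0 < s → conv kμ lμ s = exp (-μ * s) := fun s hs => by
    rw [conv_mul_exp, hkl s hs, mul_one]
  refine ⟨fun t ht => mul_nonneg (hk_nonneg t ht) (exp_pos _).le,
    fun s t hs hst => mul_le_mul (hk_anti s t hs hst) (exp_le_exp.2 (by nlinarith))
      (exp_pos _).le (hk_nonneg s hs),
    hkμ_int, fun T hT => integrableOn_Ioc_add_mul_primitive hT.le μ (hlμ_int T hT),
    fun t ht => ?_⟩
  -- `conv` of a non-integrable integrand would be `0`, not `e^{-μt}`.
  have hkμlμ_int := intervalIntegral.intervalIntegrable_of_integral_ne_zero <|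
    (hkμlμ t ht).trans_ne (exp_pos _).ne'
  have hexp : ∫ s in (0:ℝ)..t, conv kμ lμ s = ∫ s in (0:ℝ)..t, exp (-μ * s) := by
    rw [intervalIntegral.integral_of_le ht.le, intervalIntegral.integral_of_le ht.le]
    exact setIntegral_congr_fun measurableSet_Ioc fun s hs => hkμlμ s hs.1
  rw [conv_add_mul_primitive ht.le μ (hkμ_int t ht) (hlμ_int t ht) hkμlμ_int, hkμlμ t ht,
    hexp, mul_integral_exp_neg_mul]
  ring
end

section
/- Let α ∈ (0,1), ν, γ > 0, and u₀ > 0. Set μ = ν·Γ(1−α)·Γ(1+α)·u₀^γ, ε = (u₀·Γ(1+α)/(2μ))^{1/α}, C = ε^{α/γ}·u₀/2, and define v(t) = u₀ − μ·t^α/Γ(1+α) for t ∈ [0,ε] and v(t) = C·t^{−α/γ} for t ≥ ε. Then v ∈ H¹_{1,loc}(ℝ₊), v(0) = u₀, v is nonincreasing and strictly positive on [0,∞), and v is a subsolution of the fractional differential equation ∂_t^α(u−u₀) + ν·u^γ = 0, i.e. (g_{1−α}⋆v̇)(t) + ν·v(t)^γ ≤ 0 for a.a. t > 0. -/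
open MeasureTheory Set Real

/-- The standard kernel `g_β(t) = t^{β-1}/Γ(β)`. -/
noncomputable def gker (β t : ℝ) : ℝ := t ^ (β - 1) / Real.Gamma β

/-! On `[0, ε]` the derivative of `v` is `-μ g_α`, and beyond `ε` it is nonpositive. As `g_{1-α}`
is nonincreasing, with `s = min t ε` this gives
`(g_{1-α} ⋆ v̇)(t) ≤ -μ ∫₀ˢ g_{1-α}(t - τ) g_α(τ) dτ ≤ -μ g_{1-α}(t) g_{1+α}(s) = -ν u₀^γ (s/t)^α`.
The choice of `ε` and `C` makes both branches of `v` equal `u₀/2` at `ε`, so `v ≤ u₀` and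
`v(t) = (u₀/2) (ε/t)^{α/γ}` for `t ≥ ε`; either way `ν v(t)^γ ≤ ν u₀^γ (s/t)^α`. -/

section Kernel

variable {β β₁ β₂ s t : ℝ}

lemma gker_nonneg (hβ : 0 < β) (ht : 0 ≤ t) : 0 ≤ gker β t :=
  div_nonneg (rpow_nonneg ht _) (Gamma_pos_of_pos hβ).le

lemma gker_antitoneOn (hβ0 : 0 < β) (hβ1 : β ≤ 1) : AntitoneOn (gker β) (Ioi 0) :=
  fun _ hx _ _ hxy => div_le_div_of_nonneg_right
    (rpow_le_rpow_of_nonpos hx hxy (by linarith)) (Gamma_pos_of_pos hβ0).le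

lemma continuousAt_gker (ht : t ≠ 0) : ContinuousAt (gker β) t :=
  (continuousAt_id.rpow_const (Or.inl ht)).div_const _

lemma intervalIntegrable_gker (hβ : 0 < β) (t : ℝ) : IntervalIntegrable (gker β) volume 0 t :=
  (intervalIntegral.intervalIntegrable_rpow' (by linarith)).div_const _

lemma intervalIntegrable_gker_sub (hβ : 0 < β) (s t : ℝ) :
    IntervalIntegrable (fun τ => gker β (t - τ)) volume s t := by
  simpa using ((intervalIntegrable_gker hβ (t - s)).comp_sub_left t).symm

lemma integral_gker (hβ : 0 < β) (t : ℝ) : ∫ τ in (0:ℝ)..t, gker β τ = gker (β + 1) t := by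
  simp only [gker]
  rw [intervalIntegral.integral_div, integral_rpow (Or.inl (by linarith)), sub_add_cancel,
    zero_rpow hβ.ne', sub_zero, add_sub_cancel_right, Gamma_add_one hβ.ne', div_div]

lemma intervalIntegrable_gker_sub_mul_gker (hβ₁ : 0 < β₁) (hβ₂ : 0 < β₂) (ht : 0 < t) :
    IntervalIntegrable (fun τ => gker β₁ (t - τ) * gker β₂ τ) volume 0 t := by
  refine IntervalIntegrable.trans (b := t / 2) ?_ ?_
  · refine (intervalIntegrable_gker hβ₂ _).continuousOn_mul fun τ hτ => ?_
    rw [uIcc_of_le (by linarith)] at hτ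
    exact ((continuousAt_gker (sub_pos.2 (by linarith [hτ.2])).ne').comp
      (continuousAt_const.sub continuousAt_id)).continuousWithinAt
  · refine (intervalIntegrable_gker_sub hβ₁ _ _).mul_continuousOn fun τ hτ => ?_
    rw [uIcc_of_le (by linarith)] at hτ
    exact (continuousAt_gker (by linarith [hτ.1] : (0:ℝ) < τ).ne').continuousWithinAt

lemma gker_mul_gker_le_integral (hβ₁0 : 0 < β₁) (hβ₁1 : β₁ ≤ 1) (hβ₂ : 0 < β₂) (hs : 0 < s)
    (hst : s ≤ t) :
    gker β₁ t * gker (β₂ + 1) s ≤ ∫ τ in (0:ℝ)..s, gker β₁ (t - τ) * gker β₂ τ := by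
  rw [← integral_gker hβ₂, ← intervalIntegral.integral_const_mul]
  refine intervalIntegral.integral_mono_on_of_le_Ioo hs.le
    ((intervalIntegrable_gker hβ₂ s).const_mul _)
    ((intervalIntegrable_gker_sub_mul_gker hβ₁0 hβ₂ (hs.trans_le hst)).mono_set
      (uIcc_subset_uIcc_left (mem_uIcc_of_le hs.le hst)))
    fun τ hτ => mul_le_mul_of_nonneg_right ?_ (gker_nonneg hβ₂ hτ.1.le)
  exact gker_antitoneOn hβ₁0 hβ₁1 (show 0 < t - τ by linarith [hτ.2]) (hs.trans_le hst)
    (by linarith [hτ.1])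

lemma conv_gker_le {f : ℝ → ℝ} {c : ℝ} (hβ₁0 : 0 < β₁) (hβ₁1 : β₁ ≤ 1) (hβ₂ : 0 < β₂)
    (hc : 0 ≤ c) (hs : 0 < s) (hst : s ≤ t) (hf : EqOn f (fun τ => -(c * gker β₂ τ)) (Ioc 0 s))
    (hf_nonpos : ∀ τ ∈ Icc s t, f τ ≤ 0)
    (hint : IntervalIntegrable (fun τ => gker β₁ (t - τ) * f τ) volume s t) :
    conv (gker β₁) f t ≤ -(c * (gker β₁ t * gker (β₂ + 1) s)) := by
  have hinit : EqOn (fun τ => gker β₁ (t - τ) * f τ)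
      (fun τ => -c * (gker β₁ (t - τ) * gker β₂ τ)) (Ioc 0 s) := fun τ hτ => by
    simp only [hf hτ]; ring
  have hint₀ : IntervalIntegrable (fun τ => gker β₁ (t - τ) * f τ) volume 0 s := by
    refine (((intervalIntegrable_gker_sub_mul_gker hβ₁0 hβ₂ (hs.trans_le hst)).mono_set
      (uIcc_subset_uIcc_left (mem_uIcc_of_le hs.le hst))).const_mul (-c)).congr ?_
    rw [uIoc_of_le hs.le]
    exact hinit.symm
  have htail : ∫ τ in s..t, gker β₁ (t - τ) * f τ ≤ 0 := by
    rw [← neg_nonneg, ← intervalIntegral.integral_neg]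
    exact intervalIntegral.integral_nonneg hst fun τ hτ => neg_nonneg.2 <|
      mul_nonpos_of_nonneg_of_nonpos (gker_nonneg hβ₁0 (by linarith [hτ.2])) (hf_nonpos τ hτ)
  calc conv (gker β₁) f t
      = (∫ τ in (0:ℝ)..s, gker β₁ (t - τ) * f τ) + ∫ τ in s..t, gker β₁ (t - τ) * f τ :=
        (intervalIntegral.integral_add_adjacent_intervals hint₀ hint).symm
    _ ≤ -c * ∫ τ in (0:ℝ)..s, gker β₁ (t - τ) * gker β₂ τ := by
        rw [← intervalIntegral.integral_const_mul,
          intervalIntegral.integral_congr_Ioo_of_le hs.le (hinit.mono Ioo_subset_Ioc_self)]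
        linarith
    _ ≤ -(c * (gker β₁ t * gker (β₂ + 1) s)) := by
        rw [neg_mul, neg_le_neg_iff]
        exact mul_le_mul_of_nonneg_left (gker_mul_gker_le_integral hβ₁0 hβ₁1 hβ₂ hs hst) hc

end Kernel

noncomputable def profile (α γ u₀ μ ε C t : ℝ) : ℝ :=
  if t ≤ ε then u₀ - μ * t ^ α / Gamma (1 + α) else C * t ^ (-(α / γ))

noncomputable def profileDeriv (α γ μ ε C t : ℝ) : ℝ :=
  if t ≤ ε then -(μ * gker α t) else -(C * (α / γ) * t ^ (-(α / γ) - 1))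

section Profile

variable {α γ u₀ μ ε C t : ℝ}

lemma profile_of_le (ht : t ≤ ε) :
    profile α γ u₀ μ ε C t = u₀ - μ * t ^ α / Gamma (1 + α) :=
  if_pos ht

lemma profile_of_ge (hμε : μ * ε ^ α / Gamma (1 + α) = u₀ / 2)
    (hCε : C * ε ^ (-(α / γ)) = u₀ / 2) (ht : ε ≤ t) :
    profile α γ u₀ μ ε C t = C * t ^ (-(α / γ)) := by
  rcases ht.eq_or_lt with rfl | ht
  · rw [profile_of_le le_rfl]; linarith
  · exact if_neg (not_le.2 ht)

lemma profile_zero (hα : 0 < α) (hε : 0 ≤ ε) : profile α γ u₀ μ ε C 0 = u₀ := by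
  rw [profile_of_le hε, zero_rpow hα.ne']; ring

lemma profile_antitoneOn (hα : 0 < α) (hγ : 0 < γ) (hμ : 0 ≤ μ) (hC : 0 ≤ C) (hε : 0 < ε)
    (hμε : μ * ε ^ α / Gamma (1 + α) = u₀ / 2) (hCε : C * ε ^ (-(α / γ)) = u₀ / 2) :
    AntitoneOn (profile α γ u₀ μ ε C) (Ici 0) := by
  have hhead : AntitoneOn (profile α γ u₀ μ ε C) (Icc 0 ε) := fun s hs t ht hst => by
    rw [profile_of_le hs.2, profile_of_le ht.2, sub_le_sub_iff_left]
    gcongr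
    exact hs.1
  have htail : AntitoneOn (profile α γ u₀ μ ε C) (Ici ε) := fun s hs t ht hst => by
    rw [profile_of_ge hμε hCε hs, profile_of_ge hμε hCε ht]
    exact mul_le_mul_of_nonneg_left
      (rpow_le_rpow_of_nonpos (hε.trans_le hs) hst (neg_nonpos.2 (div_pos hα hγ).le)) hC
  rw [← Icc_union_Ici_eq_Ici hε.le]
  exact hhead.union_right htail (isGreatest_Icc hε.le) isLeast_Ici

lemma profile_pos (hα : 0 < α) (hγ : 0 < γ) (hu₀ : 0 < u₀) (hμ : 0 ≤ μ) (hC : 0 < C)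
    (hε : 0 < ε) (hμε : μ * ε ^ α / Gamma (1 + α) = u₀ / 2)
    (hCε : C * ε ^ (-(α / γ)) = u₀ / 2) (ht : 0 ≤ t) : 0 < profile α γ u₀ μ ε C t := by
  rcases le_total t ε with htε | hεt
  · calc 0 < u₀ - u₀ / 2 := by linarith
      _ = profile α γ u₀ μ ε C ε := by rw [profile_of_le le_rfl, hμε]
      _ ≤ profile α γ u₀ μ ε C t :=
        profile_antitoneOn hα hγ hμ hC.le hε hμε hCε ht hε.le htε
  · rw [profile_of_ge hμε hCε hεt]
    have ht0 := hε.trans_le hεt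
    positivity

lemma profile_le (hα : 0 < α) (hγ : 0 < γ) (hμ : 0 ≤ μ) (hC : 0 ≤ C) (hε : 0 < ε)
    (hμε : μ * ε ^ α / Gamma (1 + α) = u₀ / 2) (hCε : C * ε ^ (-(α / γ)) = u₀ / 2)
    (ht : 0 ≤ t) : profile α γ u₀ μ ε C t ≤ u₀ := by
  simpa only [profile_zero hα hε.le] using
    profile_antitoneOn hα hγ hμ hC hε hμε hCε self_mem_Ici ht ht

lemma profile_eq_of_ge (hε : 0 < ε) (hμε : μ * ε ^ α / Gamma (1 + α) = u₀ / 2)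
    (hCε : C * ε ^ (-(α / γ)) = u₀ / 2) (ht : ε ≤ t) :
    profile α γ u₀ μ ε C t = u₀ / 2 * (ε / t) ^ (α / γ) := by
  have ht0 := hε.trans_le ht
  rw [profile_of_ge hμε hCε ht, ← hCε, div_rpow hε.le ht0.le, rpow_neg hε.le, rpow_neg ht0.le]
  have hεk := (rpow_pos_of_pos hε (α / γ)).ne'
  field_simp

lemma profile_rpow_le (hα : 0 < α) (hγ : 0 < γ) (hu₀ : 0 < u₀) (hμ : 0 ≤ μ) (hC : 0 < C)
    (hε : 0 < ε) (hμε : μ * ε ^ α / Gamma (1 + α) = u₀ / 2)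
    (hCε : C * ε ^ (-(α / γ)) = u₀ / 2) (ht : 0 < t) :
    profile α γ u₀ μ ε C t ^ γ ≤ u₀ ^ γ * (min t ε / t) ^ α := by
  rcases le_total t ε with htε | hεt
  · rw [min_eq_left htε, div_self ht.ne', one_rpow, mul_one]
    exact rpow_le_rpow (profile_pos hα hγ hu₀ hμ hC hε hμε hCε ht.le).le
      (profile_le hα hγ hμ hC.le hε hμε hCε ht.le) hγ.le
  · rw [min_eq_right hεt, profile_eq_of_ge hε hμε hCε hεt,
      mul_rpow (by positivity) (by positivity), ← rpow_mul (by positivity),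
      div_mul_cancel₀ α hγ.ne']
    gcongr
    linarith

lemma profileDeriv_nonpos (hα : 0 < α) (hγ : 0 < γ) (hμ : 0 ≤ μ) (hC : 0 ≤ C) (ht : 0 ≤ t) :
    profileDeriv α γ μ ε C t ≤ 0 := by
  unfold profileDeriv
  split_ifs
  · exact neg_nonpos.2 (mul_nonneg hμ (gker_nonneg hα ht))
  · exact neg_nonpos.2 (by positivity)

lemma profileDeriv_eqOn_Ioi :
    EqOn (profileDeriv α γ μ ε C) (fun τ => -(C * (α / γ) * τ ^ (-(α / γ) - 1))) (Ioi ε) :=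
  fun _ hτ => if_neg (not_le.2 hτ)

lemma continuousOn_profileDeriv_tail (α γ C : ℝ) (hε : 0 < ε) :
    ContinuousOn (fun τ => -(C * (α / γ) * τ ^ (-(α / γ) - 1))) (Ici ε) :=
  (continuousOn_const.mul (continuousOn_id.rpow_const fun _ hτ =>
    Or.inl (hε.trans_le hτ).ne')).neg

lemma intervalIntegrable_profileDeriv (hα : 0 < α) (hε : 0 < ε) (ht : 0 ≤ t) :
    IntervalIntegrable (profileDeriv α γ μ ε C) volume 0 t := by
  have hhead : IntervalIntegrable (profileDeriv α γ μ ε C) volume 0 ε := by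
    refine ((intervalIntegrable_gker hα ε).const_mul μ).neg.congr fun τ hτ => ?_
    rw [uIoc_of_le hε.le] at hτ
    exact (if_pos hτ.2).symm
  rcases le_total t ε with htε | hεt
  · exact hhead.mono_set (uIcc_subset_uIcc_left (mem_uIcc_of_le ht htε))
  · refine hhead.trans
      (((continuousOn_profileDeriv_tail α γ C hε).mono ?_).intervalIntegrable.congr ?_)
    · rw [uIcc_of_le hεt]; exact Icc_subset_Ici_self
    · rw [uIoc_of_le hεt]; exact (profileDeriv_eqOn_Ioi.mono Ioc_subset_Ioi_self).symm

lemma integral_profileDeriv_of_le (hα : 0 < α) (ht : 0 ≤ t) (htε : t ≤ ε) :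
    ∫ τ in (0:ℝ)..t, profileDeriv α γ μ ε C τ = -(μ * t ^ α / Gamma (1 + α)) := by
  rw [intervalIntegral.integral_congr_Ioo_of_le ht (f := profileDeriv α γ μ ε C)
      (g := fun τ => -(μ * gker α τ)) fun τ hτ => if_pos (hτ.2.le.trans htε),
    intervalIntegral.integral_neg, intervalIntegral.integral_const_mul, integral_gker hα, gker,
    add_sub_cancel_right, add_comm, mul_div_assoc]

lemma integral_profileDeriv_of_ge (hα : 0 < α) (hγ : 0 < γ) (hε : 0 < ε) (ht : ε ≤ t) :
    ∫ τ in ε..t, profileDeriv α γ μ ε C τ = C * t ^ (-(α / γ)) - C * ε ^ (-(α / γ)) := by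
  have hk : α / γ ≠ 0 := (div_pos hα hγ).ne'
  rw [intervalIntegral.integral_congr_Ioo_of_le ht
      (profileDeriv_eqOn_Ioi.mono Ioo_subset_Ioi_self),
    intervalIntegral.integral_neg, intervalIntegral.integral_const_mul,
    integral_rpow (Or.inr ⟨by simpa using hk, notMem_uIcc_of_lt hε (hε.trans_le ht)⟩),
    sub_add_cancel]
  field_simp

lemma profile_eq_add_integral (hα : 0 < α) (hγ : 0 < γ) (hε : 0 < ε)
    (hμε : μ * ε ^ α / Gamma (1 + α) = u₀ / 2) (hCε : C * ε ^ (-(α / γ)) = u₀ / 2)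
    (ht : 0 ≤ t) :
    profile α γ u₀ μ ε C t = u₀ + ∫ τ in (0:ℝ)..t, profileDeriv α γ μ ε C τ := by
  rcases le_total t ε with htε | hεt
  · rw [profile_of_le htε, integral_profileDeriv_of_le hα ht htε]; ring
  · rw [profile_of_ge hμε hCε hεt,
      ← intervalIntegral.integral_add_adjacent_intervals
        (intervalIntegrable_profileDeriv hα hε hε.le)
        ((intervalIntegrable_profileDeriv hα hε ht).mono_set
          (uIcc_subset_uIcc_right (mem_uIcc_of_le hε.le hεt))),
      integral_profileDeriv_of_le hα hε.le le_rfl, integral_profileDeriv_of_ge hα hγ hε hεt, hμε,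
      hCε]
    ring

lemma intervalIntegrable_gker_sub_mul_profileDeriv (hα1 : α < 1) (hε : 0 < ε) :
    IntervalIntegrable (fun τ => gker (1 - α) (t - τ) * profileDeriv α γ μ ε C τ) volume
      (min t ε) t := by
  rcases le_total t ε with htε | hεt
  · simpa only [min_eq_left htε] using IntervalIntegrable.refl
  · rw [min_eq_right hεt]
    refine ((intervalIntegrable_gker_sub (β := 1 - α) (by linarith) ε t).mul_continuousOn
      ((continuousOn_profileDeriv_tail α γ C hε).mono ?_)).congr ?_
    · rw [uIcc_of_le hεt]; exact Icc_subset_Ici_self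
    · rw [uIoc_of_le hεt]
      exact fun τ hτ => by simp only [profileDeriv_eqOn_Ioi hτ.1]

lemma conv_profileDeriv_add_le {ν : ℝ} (hα0 : 0 < α) (hα1 : α < 1) (hν : 0 ≤ ν) (hγ : 0 < γ)
    (hu₀ : 0 < u₀) (hμ : μ = ν * Gamma (1 - α) * Gamma (1 + α) * u₀ ^ γ) (hμ0 : 0 ≤ μ)
    (hC : 0 < C) (hε : 0 < ε) (hμε : μ * ε ^ α / Gamma (1 + α) = u₀ / 2)
    (hCε : C * ε ^ (-(α / γ)) = u₀ / 2) (ht : 0 < t) :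
    conv (gker (1 - α)) (profileDeriv α γ μ ε C) t + ν * profile α γ u₀ μ ε C t ^ γ ≤ 0 := by
  have hs : 0 < min t ε := lt_min ht hε
  have hconv := conv_gker_le (f := profileDeriv α γ μ ε C) (by linarith : 0 < 1 - α)
    (by linarith) hα0 hμ0 hs (min_le_left t ε) (fun τ hτ => if_pos (hτ.2.trans (min_le_right t ε)))
    (fun τ hτ => profileDeriv_nonpos hα0 hγ hμ0 hC.le (hs.le.trans hτ.1))
    (intervalIntegrable_gker_sub_mul_profileDeriv hα1 hε)
  have hkernels : μ * (gker (1 - α) t * gker (α + 1) (min t ε)) =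
      ν * (u₀ ^ γ * (min t ε / t) ^ α) := by
    have hΓ : Gamma (1 - α) ≠ 0 := (Gamma_pos_of_pos (by linarith)).ne'
    simp only [gker]
    rw [hμ, div_rpow hs.le ht.le, sub_sub_cancel_left, add_sub_cancel_right, add_comm α 1,
      rpow_neg ht.le]
    field_simp
  have hv := mul_le_mul_of_nonneg_left
    (profile_rpow_le hα0 hγ hu₀ hμ0 hC hε hμε hCε ht) hν
  linarith

end Profile

/-- The explicit function `v` (piecewise `u₀ - μ g_{1+α}(t)` and `C t^{-α/γ}`) is a
locally absolutely continuous, nonincreasing, strictly positive subsolution of the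
fractional ODE `∂ₜ^α(u - u₀) + ν u^γ = 0`, i.e. `(g_{1-α} ⋆ v̇)(t) + ν v(t)^γ ≤ 0`
for a.a. `t > 0`. -/
theorem fractional_ode_subsolution
    (α ν γ u₀ : ℝ) (hα0 : 0 < α) (hα1 : α < 1) (hν : 0 < ν) (hγ : 0 < γ)
    (hu₀ : 0 < u₀)
    (μ ε C : ℝ)
    (hμ : μ = ν * Real.Gamma (1 - α) * Real.Gamma (1 + α) * u₀ ^ γ)
    (hε : ε = (u₀ * Real.Gamma (1 + α) / (2 * μ)) ^ (1 / α))
    (hC : C = ε ^ (α / γ) * u₀ / 2)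
    (v : ℝ → ℝ)
    (hv : v = fun t => if t ≤ ε then u₀ - μ * t ^ α / Real.Gamma (1 + α)
      else C * t ^ (-(α / γ))) :
    v 0 = u₀ ∧ AntitoneOn v (Ici 0) ∧ (∀ t, 0 ≤ t → 0 < v t) ∧
    ∃ v' : ℝ → ℝ,
      (∀ T, 0 < T → IntegrableOn v' (Icc 0 T)) ∧
      (∀ t, 0 ≤ t → v t = u₀ + ∫ τ in (0:ℝ)..t, v' τ) ∧
      (∀ᵐ t ∂(volume.restrict (Ioi (0:ℝ))),
        conv (gker (1 - α)) v' t + ν * v t ^ γ ≤ 0) := by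
  have hμ0 : 0 < μ := by rw [hμ]; positivity
  have hε0 : 0 < ε := by rw [hε]; positivity
  have hμε : μ * ε ^ α / Gamma (1 + α) = u₀ / 2 := by
    rw [hε, ← rpow_mul (by positivity), one_div_mul_cancel hα0.ne', rpow_one]
    field_simp
  have hCε : C * ε ^ (-(α / γ)) = u₀ / 2 := by
    rw [hC, rpow_neg hε0.le]
    field_simp [(rpow_pos_of_pos hε0 (α / γ)).ne']
  have hC0 : 0 < C := by rw [hC]; positivity
  subst hv
  refine ⟨profile_zero hα0 hε0.le, profile_antitoneOn hα0 hγ hμ0.le hC0.le hε0 hμε hCε,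
    fun t ht => profile_pos hα0 hγ hu₀ hμ0.le hC0 hε0 hμε hCε ht, profileDeriv α γ μ ε C,
    fun T hT => (intervalIntegrable_iff_integrableOn_Icc_of_le hT.le).1
      (intervalIntegrable_profileDeriv hα0 hε0 hT.le),
    fun t ht => profile_eq_add_integral hα0 hγ hε0 hμε hCε ht, ?_⟩
  filter_upwards [ae_restrict_mem measurableSet_Ioi] with t ht
  exact conv_profileDeriv_add_le hα0 hα1 hν.le hγ hu₀ hμ hμ0.le hC0 hε0 hμε hCε ht
end
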